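/- arXiv:1207.2888 — 10 statements merged into one kernel-verified Lean document; each statement's English description precedes it below -/
import Mathlib

section
/- Let e,f be elements of a generalized pseudoeffect algebra E. If e ⊥ f and the supremum e∨f exists in E, then the infimum e∧f exists in E, (e∨f) ⊥ (e∧f), and e⊕f = (e∨f)⊕(e∧f). -/
/- Common framework: generalized pseudoeffect algebras (GPEAs), after
   Foulis, Pulmannová, Vinceková, "The exocenter and type decompositions for
   generalized pseudoeffect algebras".
   A partial binary operation ⊕ is represented by its graph
   `R : E → E → E → Prop`, where `R a b s` means "a ⊕ b is defined and equals s". -/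

universe u v

namespace GPEApaper

/-- Raw data of a partial algebra: the graph of a partial binary operation
together with a zero element. -/
structure PartialAlg (E : Type u) where
  R : E → E → E → Prop
  zero : E

namespace PartialAlg

variable {E : Type u} (A : PartialAlg E)

/-- The axioms (GPEA1)–(GPEA5) of a generalized pseudoeffect algebra,
including the functionality (well-definedness) of the partial operation. -/
def IsGPEA : Prop :=
  -- ⊕ is a partial operation (single-valued)
  (∀ a b c d : E, A.R a b c → A.R a b d → c = d) ∧
  -- (GPEA1) associativity, both directions
  (∀ a b c ab abc : E, A.R a b ab → A.R ab c abc → ∃ bc, A.R b c bc ∧ A.R a bc abc) ∧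
  (∀ a b c bc abc : E, A.R b c bc → A.R a bc abc → ∃ ab, A.R a b ab ∧ A.R ab c abc) ∧
  -- (GPEA2) conjugacy
  (∀ a b s : E, A.R a b s → (∃ d, A.R d a s) ∧ (∃ e, A.R b e s)) ∧
  -- (GPEA3) cancellation
  (∀ a b c s : E, A.R a b s → A.R a c s → b = c) ∧
  (∀ a b c s : E, A.R b a s → A.R c a s → b = c) ∧
  -- (GPEA4) positivity
  (∀ a b : E, A.R a b A.zero → a = A.zero ∧ b = A.zero) ∧
  -- (GPEA5) zero element
  (∀ a : E, A.R a A.zero a ∧ A.R A.zero a a)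

/-- a ⊕ b is defined. -/
def Defined (a b : E) : Prop := ∃ s, A.R a b s

/-- The induced partial order: a ≤ b iff a ⊕ x = b for some x. -/
def le (a b : E) : Prop := ∃ x, A.R a x b

/-- Orthogonality: p ⊥ q iff p ⊕ q and q ⊕ p both exist and are equal. -/
def perp (a b : E) : Prop := ∃ s, A.R a b s ∧ A.R b a s

/-- b is an upper bound of the set S. -/
def IsUB (S : Set E) (b : E) : Prop := ∀ a ∈ S, A.le a b

/-- s is the supremum (least upper bound) of the set S in (E, ≤). -/
def IsSup (S : Set E) (s : E) : Prop := A.IsUB S s ∧ ∀ b, A.IsUB S b → A.le s b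

/-- s is the infimum (greatest lower bound) of the set S in (E, ≤). -/
def IsInf (S : Set E) (s : E) : Prop :=
  (∀ a ∈ S, A.le s a) ∧ ∀ b, (∀ a ∈ S, A.le b a) → A.le b s

/-- An ideal of a GPEA. -/
def IsIdeal (I : Set E) : Prop :=
  I.Nonempty ∧ (∀ a ∈ I, ∀ b, A.le b a → b ∈ I) ∧
    ∀ a ∈ I, ∀ b ∈ I, ∀ s, A.R a b s → s ∈ I

/-- E = S ⊕ S′ : S and S′ are ideals, elements of S are orthogonal to elements
of S′, and every element of E has a unique decomposition a = a₁ ⊕ a₂ with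
a₁ ∈ S, a₂ ∈ S′. -/
def IsDirectSum (S S' : Set E) : Prop :=
  A.IsIdeal S ∧ A.IsIdeal S' ∧ (∀ a ∈ S, ∀ b ∈ S', A.perp a b) ∧
    ∀ a : E, ∃! p : E × E, p.1 ∈ S ∧ p.2 ∈ S' ∧ A.R p.1 p.2 a

/-- A central ideal (direct summand). -/
def IsCentralIdeal (S : Set E) : Prop := ∃ S', A.IsDirectSum S S'

/-- A normal ideal. -/
def IsNormalIdeal (I : Set E) : Prop :=
  A.IsIdeal I ∧ ∀ a x y s : E, A.R a x s → A.R y a s → (x ∈ I ↔ y ∈ I)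

/-- The axioms (EXC1)–(EXC4): π belongs to the exocenter ΓEX(E). -/
def IsExo (π : E → E) : Prop :=
  (∀ e f s, A.R e f s → A.R (π e) (π f) (π s)) ∧
  (∀ e, π (π e) = π e) ∧
  (∀ e, A.le (π e) e) ∧
  (∀ e f, π e = e → π f = A.zero → A.perp e f)

/-- For a ≤ b, `A.rdiv a b` is the element a/b, i.e. the unique x with
a ⊕ x = b (chosen by Hilbert choice when it exists). -/
noncomputable def rdiv (a b : E) : E :=
  letI : Nonempty E := ⟨A.zero⟩
  Classical.epsilon fun x => A.R a x b

/-- For π in the exocenter, π′ e := (π e)/e. -/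
noncomputable def exoCompl (π : E → E) : E → E := fun e => A.rdiv (π e) e

/-- The order on the exocenter: ξ ≤ π iff ξ = ξ ∘ π. -/
def exoLe (_A : PartialAlg E) (ξ π : E → E) : Prop := ξ = ξ ∘ π

/-- Disjointness in the boolean algebra ΓEX(E): the meet (= composition)
of ξ and π is the zero map. -/
def exoDisjoint (ξ π : E → E) : Prop := ∀ e, ξ (π e) = A.zero

/-- The join in the boolean algebra ΓEX(E): π ∨ ξ = (π′ ∘ ξ′)′. -/
noncomputable def exoSup (π ξ : E → E) : E → E :=
  A.exoCompl (A.exoCompl π ∘ A.exoCompl ξ)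

/-- σ is the least upper bound of a set S of exocenter elements,
with respect to the order of the boolean algebra ΓEX(E). -/
def IsExoLUB (S : Set (E → E)) (σ : E → E) : Prop :=
  A.IsExo σ ∧ (∀ π ∈ S, A.exoLe π σ) ∧
    ∀ β, A.IsExo β → (∀ π ∈ S, A.exoLe π β) → A.exoLe σ β

/-- A central element (C1)–(C4). -/
def Central (c : E) : Prop :=
  (∀ a : E, ∃ a₁ a₂, A.le a₁ c ∧ A.Defined a₂ c ∧ A.R a₁ a₂ a) ∧
  (∀ a b : E, A.le a c → A.Defined b c → A.perp a b) ∧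
  (∀ a b s : E, A.le a c → A.le b c → A.R a b s → A.le s c) ∧
  (∀ a b ab : E, A.Defined a c → A.Defined b c → A.R a b ab → A.Defined ab c)

/-- `A.ListSumsTo [e₁, …, eₙ] s` : the orthosum e₁ ⊕ (e₂ ⊕ (⋯ ⊕ eₙ)) is
defined and equals s (empty orthosum is 0). -/
def ListSumsTo (A : PartialAlg E) : List E → E → Prop
  | [], s => s = A.zero
  | a :: l, s => ∃ t, A.ListSumsTo l t ∧ A.R a t s

/-- The finite subfamily indexed by F is orthogonal with orthosum s:
every enumeration of F yields the orthosum s. -/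
def FinsetSumsTo {ι : Type v} (e : ι → E) (F : Finset ι) (s : E) : Prop :=
  ∀ l : List ι, l.Nodup →
    (letI : DecidableEq ι := Classical.decEq ι; l.toFinset) = F →
    A.ListSumsTo (l.map e) s

/-- A family is orthogonal iff every finite subfamily is orthogonal
(all enumerations have a common orthosum). -/
def IsOrthogonal {ι : Type v} (e : ι → E) : Prop :=
  ∀ F : Finset ι, ∃ s, A.FinsetSumsTo e F s

/-- A family is orthosummable with orthosum s iff it is orthogonal and s is
the supremum of its finite partial orthosums. -/
def IsOrthosum {ι : Type v} (e : ι → E) (s : E) : Prop :=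
  A.IsOrthogonal e ∧ A.IsSup {t | ∃ F : Finset ι, A.FinsetSumsTo e F t} s

/-- A family (eᵢ) is ΓEX-orthogonal iff there is a pairwise disjoint family
(πᵢ) in the exocenter with πᵢ eᵢ = eᵢ for all i. -/
def GEXOrthogonal {ι : Type v} (e : ι → E) : Prop :=
  ∃ π : ι → E → E, (∀ i, A.IsExo (π i)) ∧
    (∀ i j, i ≠ j → A.exoDisjoint (π i) (π j)) ∧ ∀ i, π i (e i) = e i

/-- E is centrally orthocomplete: (CO1) every ΓEX-orthogonal family is
orthosummable, and (CO2) orthosums respect one-sided summability. -/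
def IsCOGPEA : Prop :=
  (∀ {ι : Type u} (e : ι → E), A.GEXOrthogonal e → ∃ s, A.IsOrthosum e s) ∧
  (∀ {ι : Type u} (e : ι → E) (s : E), A.GEXOrthogonal e → A.IsOrthosum e s →
    ∀ a : E, ((∀ i, A.Defined a (e i)) → A.Defined a s) ∧
             ((∀ i, A.Defined (e i) a) → A.Defined s a))

/-- γ is the exocentral cover of e: the smallest element of ΓEX(E) fixing e. -/
def IsExoCover (e : E) (γ : E → E) : Prop :=
  A.IsExo γ ∧ γ e = e ∧ ∀ π, A.IsExo π → π e = e → A.exoLe γ π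

/-- The restriction of the partial algebra to a subset containing 0 (with the
operation defined whenever it is defined in E and the result lies in the subset). -/
def restrictSet (S : Set E) (h0 : A.zero ∈ S) : PartialAlg S where
  R a b s := A.R a.1 b.1 s.1
  zero := ⟨A.zero, h0⟩

/-- The axioms (PEA1)–(PEA4) of a pseudoeffect algebra with unit `one`
(including single-valuedness of the partial operation). -/
def IsPEA (one : E) : Prop :=
  (∀ a b c d : E, A.R a b c → A.R a b d → c = d) ∧
  -- (PEA1)
  (∀ a b c ab abc : E, A.R a b ab → A.R ab c abc → ∃ bc, A.R b c bc ∧ A.R a bc abc) ∧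
  (∀ a b c bc abc : E, A.R b c bc → A.R a bc abc → ∃ ab, A.R a b ab ∧ A.R ab c abc) ∧
  -- (PEA2)
  (∀ a : E, ∃! d, A.R a d one) ∧
  (∀ a : E, ∃! e, A.R e a one) ∧
  -- (PEA3)
  (∀ a b s : E, A.R a b s → (∃ d, A.R d a s) ∧ (∃ e, A.R b e s)) ∧
  -- (PEA4)
  (∀ a s : E, A.R one a s ∨ A.R a one s → a = A.zero)

end PartialAlg

end GPEApaper

open GPEApaper PartialAlg in
/-- Lemma 2.4: if e ⊥ f and e ∨ f exists, then e ∧ f exists,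
(e ∨ f) ⊥ (e ∧ f), and e ⊕ f = (e ∨ f) ⊕ (e ∧ f). -/
theorem stmt_1 {E : Type u} (A : PartialAlg E) (hA : A.IsGPEA)
    (e f s j : E) (hsum : A.R e f s ∧ A.R f e s)
    (hsup : A.IsSup {e, f} j) :
    ∃ m : E, A.IsInf {e, f} m ∧ A.R j m s ∧ A.R m j s := by
  obtain ⟨hfun, hassoc1, hassoc2, hconj, hcancL, hcancR, hpos, hzero⟩ := hA
  obtain ⟨hef, hfe⟩ := hsum
  -- antitone lemma for left complements: x ≤ y, cy ⊕ y = s, cx ⊕ x = s → cy ≤ cx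
  have antL : ∀ x y t cy cx, A.R x t y → A.R cy y s → A.R cx x s → A.le cy cx := by
    intro x y t cy cx hxt hcy hcx
    obtain ⟨⟨t', ht'⟩, _⟩ := hconj x t y hxt
    obtain ⟨v, hv1, hv2⟩ := hassoc2 cy t' x y s ht' hcy
    have hv : v = cx := hcancR x v cx s hv2 hcx
    exact ⟨t', hv ▸ hv1⟩
  -- antitone lemma for right complements: x ≤ y, y ⊕ dy = s, x ⊕ dx = s → dy ≤ dx
  have antR : ∀ x y t dy dx, A.R x t y → A.R y dy s → A.R x dx s → A.le dy dx := by
    intro x y t dy dx hxt hdy hdx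
    obtain ⟨tdy, h1, h2⟩ := hassoc1 x t dy y s hxt hdy
    have ht : tdy = dx := hcancL x tdy dx s h2 hdx
    obtain ⟨_, e', he'⟩ := hconj t dy dx (ht ▸ h1)
    exact ⟨e', he'⟩
  -- antisymmetry of ≤
  have antisym : ∀ a b, A.le a b → A.le b a → a = b := by
    intro a b ⟨x, hx⟩ ⟨y, hy⟩
    obtain ⟨xy, hxy1, hxy2⟩ := hassoc1 a x y b a hx hy
    have h0 : xy = A.zero := hcancL a xy A.zero a hxy2 (hzero a).1
    obtain ⟨hx0, _⟩ := hpos x y (h0 ▸ hxy1)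
    exact hfun a x b a hx (hx0 ▸ (hzero a).1) |>.symm ▸ rfl
  have heM : e ∈ ({e, f} : Set E) := by simp
  have hfM : f ∈ ({e, f} : Set E) := by simp
  have hej : A.le e j := hsup.1 e heM
  have hfj : A.le f j := hsup.1 f hfM
  have hjs : A.le j s := by
    apply hsup.2
    intro a ha
    rcases ha with rfl | ha
    · exact ⟨f, hef⟩
    · rcases ha with rfl
      exact ⟨e, hfe⟩
  obtain ⟨d, hd⟩ := hjs
  obtain ⟨⟨m, hm⟩, _⟩ := hconj j d s hd
  obtain ⟨x1, hx1⟩ := hej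
  obtain ⟨x2, hx2⟩ := hfj
  -- m is a lower bound of {e, f}
  have hmf : A.le m f := antL e j x1 m f hx1 hm hfe
  have hme : A.le m e := antL f j x2 m e hx2 hm hef
  -- d is a lower bound of {e, f}
  have hdf : A.le d f := by
    obtain ⟨xd, h1, h2⟩ := hassoc1 e x1 d j s hx1 hd
    have : xd = f := hcancL e xd f s h2 hef
    obtain ⟨_, e', he'⟩ := hconj x1 d f (this ▸ h1)
    exact ⟨e', he'⟩
  have hde : A.le d e := by
    obtain ⟨xd, h1, h2⟩ := hassoc1 f x2 d j s hx2 hd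
    have : xd = e := hcancL f xd e s h2 hfe
    obtain ⟨_, e', he'⟩ := hconj x2 d e (this ▸ h1)
    exact ⟨e', he'⟩
  -- m is the greatest lower bound
  have hmG : ∀ b, A.le b e → A.le b f → A.le b m := by
    intro b ⟨u, hu⟩ ⟨v, hv⟩
    obtain ⟨uf, _, hbw⟩ := hassoc1 b u f e s hu hef
    have hfw : A.le f uf := antR b e u f uf hu hef hbw
    have hew : A.le e uf := antR b f v e uf hv hfe hbw
    have hjw : A.le j uf := by
      apply hsup.2
      intro a ha
      rcases ha with rfl | ha
      · exact hew
      · rcases ha with rfl; exact hfw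
    obtain ⟨z, hz⟩ := hjw
    exact antL j uf z b m hz hbw hm
  -- d is also such that every lower bound is below d
  have hdG : ∀ b, A.le b e → A.le b f → A.le b d := by
    intro b ⟨u, hu⟩ ⟨v, hv⟩
    obtain ⟨uf, _, hbw⟩ := hassoc1 b u f e s hu hef
    obtain ⟨⟨w', hw'⟩, _⟩ := hconj b uf s hbw
    have hfw : A.le f w' := antL b e u f w' hu hfe hw'
    have hew : A.le e w' := antL b f v e w' hv hef hw'
    have hjw : A.le j w' := by
      apply hsup.2
      intro a ha
      rcases ha with rfl | ha
      · exact hew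
      · rcases ha with rfl; exact hfw
    obtain ⟨z', hz'⟩ := hjw
    exact antR j w' z' b d hz' hw' hd
  -- m = d
  have hmd : m = d := antisym m d (hdG m hme hmf) (hmG d hde hdf)
  refine ⟨m, ⟨?_, ?_⟩, hmd ▸ hd, hm⟩
  · intro a ha
    rcases ha with rfl | ha
    · exact hme
    · rcases ha with rfl; exact hmf
  · intro b hb
    exact hmG b (hb e heM) (hb f hfM)
end

section
/- Let E be a generalized pseudoeffect algebra and let u ∈ E. Then (E[0,u], ⊕_u, 0, u) is a pseudoeffect algebra, where E[0,u] := {a ∈ E : a ≤ u} and, for a,b ∈ E[0,u], a⊕_u b is defined iff a⊕b exists in E and a⊕b ≤ u, in which case a⊕_u b := a⊕b. -/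
/- Common framework: generalized pseudoeffect algebras (GPEAs), after
   Foulis, Pulmannová, Vinceková, "The exocenter and type decompositions for
   generalized pseudoeffect algebras".
   A partial binary operation ⊕ is represented by its graph
   `R : E → E → E → Prop`, where `R a b s` means "a ⊕ b is defined and equals s". -/

universe u v

open GPEApaper PartialAlg in
/-- Proposition 2.6: for u ∈ E, the interval E[0,u] with the restricted
operation (a ⊕ᵤ b defined iff a ⊕ b exists in E and a ⊕ b ≤ u, i.e. iff the
sum lies in the interval) is a pseudoeffect algebra with unit u. -/
theorem stmt_2 {E : Type u} (A : PartialAlg E) (hA : A.IsGPEA) (u : E) :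
    ∃ (h0 : A.zero ∈ {a : E | A.le a u}) (hu : u ∈ {a : E | A.le a u}),
      (A.restrictSet {a : E | A.le a u} h0).IsPEA ⟨u, hu⟩ := by
  obtain ⟨hfun, hassoc1, hassoc2, hconj, hlcan, hrcan, hpos, hzero⟩ := hA
  -- transitivity of le
  have htrans : ∀ a b c : E, A.le a b → A.le b c → A.le a c := by
    rintro a b c ⟨x, hx⟩ ⟨y, hy⟩
    obtain ⟨xy, _, hxy2⟩ := hassoc1 a x y b c hx hy
    exact ⟨xy, hxy2⟩
  -- antisymmetry
  have hanti : ∀ a b : E, A.le a b → A.le b a → a = b := by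
    rintro a b ⟨x, hx⟩ ⟨y, hy⟩
    obtain ⟨xy, hxy1, hxy2⟩ := hassoc1 a x y b a hx hy
    have := hlcan a xy A.zero a hxy2 (hzero a).1
    subst this
    obtain ⟨hx0, _⟩ := hpos x y hxy1
    subst hx0
    exact hfun a A.zero a b (hzero a).1 hx
  refine ⟨⟨u, (hzero u).2⟩, ⟨A.zero, (hzero u).1⟩, ?_, ?_, ?_, ?_, ?_, ?_, ?_⟩
  · rintro ⟨a, _⟩ ⟨b, _⟩ ⟨c, _⟩ ⟨d, _⟩ h1 h2
    exact Subtype.ext (hfun a b c d h1 h2)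
  · rintro ⟨a, _⟩ ⟨b, _⟩ ⟨c, _⟩ ⟨ab, _⟩ ⟨abc, habc⟩ h1 h2
    obtain ⟨bc, hbc1, hbc2⟩ := hassoc1 a b c ab abc h1 h2
    obtain ⟨_, e, he⟩ := hconj a bc abc hbc2
    exact ⟨⟨bc, htrans bc abc u ⟨e, he⟩ habc⟩, hbc1, hbc2⟩
  · rintro ⟨a, _⟩ ⟨b, _⟩ ⟨c, _⟩ ⟨bc, _⟩ ⟨abc, habc⟩ h1 h2
    obtain ⟨ab, hab1, hab2⟩ := hassoc2 a b c bc abc h1 h2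
    exact ⟨⟨ab, htrans ab abc u ⟨c, hab2⟩ habc⟩, hab1, hab2⟩
  · rintro ⟨a, x, hx⟩
    obtain ⟨_, e, he⟩ := hconj a x u hx
    refine ⟨⟨x, e, he⟩, hx, ?_⟩
    rintro ⟨y, _⟩ hy
    exact Subtype.ext (hlcan a y x u hy hx)
  · rintro ⟨a, x, hx⟩
    obtain ⟨⟨d, hd⟩, _⟩ := hconj a x u hx
    refine ⟨⟨d, a, hd⟩, hd, ?_⟩
    rintro ⟨y, _⟩ hy
    exact Subtype.ext (hrcan a y d u hy hd)
  · rintro ⟨a, _⟩ ⟨b, _⟩ ⟨s, hs⟩ h1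
    obtain ⟨⟨d, hd⟩, ⟨e, he⟩⟩ := hconj a b s h1
    obtain ⟨_, e2, he2⟩ := hconj b e s he
    exact ⟨⟨⟨d, htrans d s u ⟨a, hd⟩ hs⟩, hd⟩, ⟨⟨e, htrans e s u ⟨e2, he2⟩ hs⟩, he⟩⟩
  · rintro ⟨a, ha⟩ ⟨s, hs⟩ h
    apply Subtype.ext
    rcases h with h | h
    · have hsu : s = u := hanti s u hs ⟨a, h⟩
      exact hlcan u a A.zero u (hsu ▸ h) (hzero u).1
    · obtain ⟨_, e, he⟩ := hconj a u s h
      have hsu : s = u := hanti s u hs ⟨e, he⟩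
      exact hrcan u a A.zero u (hsu ▸ h) (hzero u).2
end

section
/- Every central ideal (direct summand) S of a generalized pseudoeffect algebra E is a normal ideal: whenever a,x,y ∈ E with a⊕x = y⊕a, then x ∈ S iff y ∈ S. -/
/- Common framework: generalized pseudoeffect algebras (GPEAs), after
   Foulis, Pulmannová, Vinceková, "The exocenter and type decompositions for
   generalized pseudoeffect algebras".
   A partial binary operation ⊕ is represented by its graph
   `R : E → E → E → Prop`, where `R a b s` means "a ⊕ b is defined and equals s". -/

universe u v

open GPEApaper PartialAlg in
/-- Proposition 2.8: every central ideal (direct summand) of a GPEA is normal. -/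
theorem stmt_3 {E : Type u} (A : PartialAlg E) (hA : A.IsGPEA)
    (S : Set E) (hS : A.IsCentralIdeal S) : A.IsNormalIdeal S := by
  obtain ⟨S', hIS, hIS', hperp, huniq⟩ := hS
  obtain ⟨fn, assoc1, assoc2, conj, cancL, cancR, pos, zer⟩ := hA
  refine ⟨hIS, ?_⟩
  intro a x y s hax hya
  -- decompose a
  obtain ⟨⟨a₁, a₂⟩, ⟨ha₁, ha₂, hadec⟩, -⟩ := huniq a
  constructor
  · -- x ∈ S → y ∈ S
    intro hx
    obtain ⟨⟨y₁, y₂⟩, ⟨hy₁, hy₂, hydec⟩, -⟩ := huniq y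
    -- s = (a₁ ⊕ x) ⊕ a₂
    obtain ⟨t, hxt, hat⟩ := hperp x hx a₂ ha₂
    obtain ⟨u, hu1, hu2⟩ := assoc1 a₁ a₂ x a s hadec hax
    have hut : u = t := fn _ _ _ _ hu1 hat
    subst hut
    obtain ⟨v, hv1, hv2⟩ := assoc2 a₁ x a₂ u s hxt hu2
    have hvS : v ∈ S := hIS.2.2 a₁ ha₁ x hx v hv1
    -- s = y₁ ⊕ (y₂ ⊕ a) rearranged
    obtain ⟨bc, hbc1, hbc2⟩ := assoc1 y₁ y₂ a y s hydec hya
    obtain ⟨p, hp1, hp2⟩ := assoc2 y₂ a₁ a₂ a bc hadec hbc1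
    obtain ⟨q, hq1, hq2⟩ := hperp a₁ ha₁ y₂ hy₂
    have hpq : p = q := fn _ _ _ _ hp1 hq2
    subst hpq
    obtain ⟨m, hm1, hm2⟩ := assoc2 y₁ p a₂ bc s hp2 hbc2
    obtain ⟨n, hn1, hn2⟩ := assoc2 y₁ a₁ y₂ p m hq1 hm1
    have hnS : n ∈ S := hIS.2.2 y₁ hy₁ a₁ ha₁ n hn1
    obtain ⟨k, hk1, hk2⟩ := assoc1 n y₂ a₂ m s hn2 hm2
    have hkS' : k ∈ S' := hIS'.2.2 y₂ hy₂ a₂ ha₂ k hk1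
    -- uniqueness of decomposition of s
    obtain ⟨pp, -, hsu⟩ := huniq s
    have e1 : ((v, a₂) : E × E) = pp := hsu _ ⟨hvS, ha₂, hv2⟩
    have e2 : ((n, k) : E × E) = pp := hsu _ ⟨hnS, hkS', hk2⟩
    have hka : k = a₂ := by
      have := e2.trans e1.symm
      exact (Prod.mk.injEq _ _ _ _ ▸ this).2
    rw [hka] at hk1
    have hy20 : y₂ = A.zero := cancR a₂ y₂ A.zero a₂ hk1 (zer a₂).2
    rw [hy20] at hydec
    have : y = y₁ := (fn _ _ _ _ hydec (zer y₁).1).symm ▸ rfl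
    have := fn _ _ _ _ hydec (zer y₁).1
    exact this ▸ hy₁
  · -- y ∈ S → x ∈ S
    intro hy
    obtain ⟨⟨x₁, x₂⟩, ⟨hx₁, hx₂, hxdec⟩, -⟩ := huniq x
    -- s = (y ⊕ a₁) ⊕ a₂
    obtain ⟨w, hw1, hw2⟩ := assoc2 y a₁ a₂ a s hadec hya
    have hwS : w ∈ S := hIS.2.2 y hy a₁ ha₁ w hw1
    -- s = (a₁ ⊕ x₁) ⊕ (a₂ ⊕ x₂)
    obtain ⟨u, hu1, hu2⟩ := assoc1 a₁ a₂ x a s hadec hax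
    obtain ⟨p, hp1, hp2⟩ := assoc2 a₂ x₁ x₂ x u hxdec hu1
    obtain ⟨q, hq1, hq2⟩ := hperp x₁ hx₁ a₂ ha₂
    have hpq : p = q := fn _ _ _ _ hp1 hq2
    subst hpq
    obtain ⟨k, hk1, hk2⟩ := assoc1 x₁ a₂ x₂ p u hq1 hp2
    have hkS' : k ∈ S' := hIS'.2.2 a₂ ha₂ x₂ hx₂ k hk1
    obtain ⟨n, hn1, hn2⟩ := assoc2 a₁ x₁ k u s hk2 hu2
    have hnS : n ∈ S := hIS.2.2 a₁ ha₁ x₁ hx₁ n hn1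
    obtain ⟨pp, -, hsu⟩ := huniq s
    have e1 : ((w, a₂) : E × E) = pp := hsu _ ⟨hwS, ha₂, hw2⟩
    have e2 : ((n, k) : E × E) = pp := hsu _ ⟨hnS, hkS', hn2⟩
    have hka : k = a₂ := by
      have := e2.trans e1.symm
      exact (Prod.mk.injEq _ _ _ _ ▸ this).2
    rw [hka] at hk1
    have hx20 : x₂ = A.zero := cancL a₂ x₂ A.zero a₂ hk1 (zer a₂).1
    rw [hx20] at hxdec
    have := fn _ _ _ _ hxdec (zer x₁).1
    exact this ▸ hx₁
end

section
/- If π belongs to the exocenter ΓEX(E) of a generalized pseudoeffect algebra E, then π′ ∈ ΓEX(E) and (π′)′ = π. -/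
/- Common framework: generalized pseudoeffect algebras (GPEAs), after
   Foulis, Pulmannová, Vinceková, "The exocenter and type decompositions for
   generalized pseudoeffect algebras".
   A partial binary operation ⊕ is represented by its graph
   `R : E → E → E → Prop`, where `R a b s` means "a ⊕ b is defined and equals s". -/

universe u v

open GPEApaper PartialAlg in
/-- Theorem 3.3 (ii): if π ∈ ΓEX(E), then π′ ∈ ΓEX(E) and (π′)′ = π. -/
theorem stmt_4 {E : Type u} (A : PartialAlg E) (hA : A.IsGPEA)
    (π : E → E) (hπ : A.IsExo π) :
    A.IsExo (A.exoCompl π) ∧ A.exoCompl (A.exoCompl π) = π := by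
  obtain ⟨sv, assoc1, assoc2, conj, cancL, cancR, pos, zer⟩ := hA
  obtain ⟨h1, h2, h3, h4⟩ := hπ
  -- specification of the complement: π e ⊕ π′ e = e
  have hspec : ∀ e, A.R (π e) (A.exoCompl π e) e := by
    intro e
    obtain ⟨x, hx⟩ := h3 e
    exact Classical.epsilon_spec_aux ⟨A.zero⟩ (fun x => A.R (π e) x e) ⟨x, hx⟩
  -- π (π′ e) = 0
  have hc0 : ∀ e, π (A.exoCompl π e) = A.zero := by
    intro e
    have := h1 _ _ _ (hspec e)
    rw [h2] at this
    exact cancL _ _ _ _ this (zer (π e)).1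
  -- π e ⊥ π′ f
  have hperp : ∀ e f, A.perp (π e) (A.exoCompl π f) := fun e f => h4 _ _ (h2 e) (hc0 f)
  -- π′ e ⊕ π e = e
  have hcomm : ∀ e, A.R (A.exoCompl π e) (π e) e := by
    intro e
    obtain ⟨s, hs1, hs2⟩ := hperp e e
    rwa [sv _ _ _ _ hs1 (hspec e)] at hs2
  -- uniqueness of the complement
  have huniq : ∀ e x, A.R (π e) x e → x = A.exoCompl π e :=
    fun e x hx => cancL _ _ _ _ hx (hspec e)
  refine ⟨⟨?_, ?_, ?_, ?_⟩, ?_⟩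
  · -- (EXC1)
    intro e f s hs
    obtain ⟨t, ht1, ht2⟩ := assoc1 _ _ _ _ _ (hspec e) hs
    obtain ⟨v, hv1, hv2⟩ := assoc2 _ _ _ _ _ (hspec f) ht1
    obtain ⟨s', hs'1, hs'2⟩ := hperp f e
    have hv3 : A.R (π f) (A.exoCompl π e) v := by
      rwa [sv _ _ _ _ hs'2 hv1] at hs'1
    obtain ⟨u, hu1, hu2⟩ := assoc1 _ _ _ _ _ hv3 hv2
    obtain ⟨w, hw1, hw2⟩ := assoc2 _ _ _ _ _ hu2 ht2
    have hw3 : w = π s := sv _ _ _ _ hw1 (h1 _ _ _ hs)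
    rw [hw3] at hw2
    rwa [huniq s u hw2] at hu1
  · -- (EXC2)
    intro e
    have h := hspec (A.exoCompl π e)
    rw [hc0 e] at h
    exact cancL _ _ _ _ h (zer _).2
  · -- (EXC3)
    intro e
    exact ((conj _ _ _ (hspec e)).2)
  · -- (EXC4)
    intro e f he hf
    have h1e : A.R (π e) e e := by have := hspec e; rwa [he] at this
    have hπe : π e = A.zero := cancR _ _ _ _ h1e (zer e).2
    have h1f : A.R (π f) A.zero f := by have := hspec f; rwa [hf] at this
    have hπf : π f = f := sv _ _ _ _ (zer (π f)).1 h1f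
    obtain ⟨s, hs1, hs2⟩ := h4 f e hπf hπe
    exact ⟨s, hs2, hs1⟩
  · -- (π′)′ = π
    funext e
    have hex : ∃ x, A.R (A.exoCompl π e) x e := ⟨π e, hcomm e⟩
    have h := Classical.epsilon_spec_aux ⟨A.zero⟩ (fun x => A.R (A.exoCompl π e) x e) hex
    exact cancL _ _ _ _ h (hcomm e)
end

section
/- If π belongs to the exocenter ΓEX(E) of a generalized pseudoeffect algebra E, then π(E) = {e ∈ E : πe = e} is an ideal in E, and for each e ∈ E there are uniquely determined elements e₁ ∈ π(E) and e₂ ∈ π′(E) such that e = e₁⊕e₂; in fact e₁ = πe and e₂ = π′e. -/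
/- Common framework: generalized pseudoeffect algebras (GPEAs), after
   Foulis, Pulmannová, Vinceková, "The exocenter and type decompositions for
   generalized pseudoeffect algebras".
   A partial binary operation ⊕ is represented by its graph
   `R : E → E → E → Prop`, where `R a b s` means "a ⊕ b is defined and equals s". -/

universe u v

open GPEApaper PartialAlg in
lemma gpea_le_antisymm {E : Type u} {A : PartialAlg E} (hA : A.IsGPEA)
    {a b : E} (h1 : A.le a b) (h2 : A.le b a) : a = b := by
  obtain ⟨hfn, hA1, hA2, hconj, hcL, hcR, hpos, hz⟩ := hA
  obtain ⟨u, hu⟩ := h1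
  obtain ⟨v, hv⟩ := h2
  obtain ⟨uv, huv, hauv⟩ := hA1 a u v b a hu hv
  have h0 : uv = A.zero := hcL a uv A.zero a hauv (hz a).1
  have hu0 : u = A.zero := (hpos u v (h0 ▸ huv)).1
  exact hfn a A.zero a b (hz a).1 (hu0 ▸ hu)

open GPEApaper PartialAlg in
/-- Theorem 3.3 (v), (viii): for π ∈ ΓEX(E), π(E) = {e : π e = e} is an ideal,
and every e ∈ E has uniquely determined components e₁ ∈ π(E), e₂ ∈ π′(E) with
e = e₁ ⊕ e₂; in fact e₁ = π e and e₂ = π′ e. -/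
theorem stmt_5 {E : Type u} (A : PartialAlg E) (hA : A.IsGPEA)
    (π : E → E) (hπ : A.IsExo π) :
    Set.range π = {e : E | π e = e} ∧
    A.IsIdeal (Set.range π) ∧
    ∀ e : E, A.R (π e) (A.exoCompl π e) e ∧
      ∀ e₁ e₂ : E, e₁ ∈ Set.range π → e₂ ∈ Set.range (A.exoCompl π) →
        A.R e₁ e₂ e → e₁ = π e ∧ e₂ = A.exoCompl π e := by
  have hA' := hA
  obtain ⟨hfn, hA1, hA2, hconj, hcL, hcR, hpos, hz⟩ := hA'
  obtain ⟨hx1, hx2, hx3, hx4⟩ := hπ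
  -- π e ⊕ π′e = e
  have hcompl : ∀ e, A.R (π e) (A.exoCompl π e) e := by
    intro e
    obtain ⟨x, hx⟩ := hx3 e
    exact Classical.epsilon_spec (p := fun y => A.R (π e) y e) ⟨x, hx⟩
  -- π (π′ e) = 0
  have hcompl0 : ∀ e, π (A.exoCompl π e) = A.zero := by
    intro e
    have h1 := hx1 _ _ _ (hcompl e)
    rw [hx2] at h1
    exact hcL (π e) _ _ _ h1 (hz (π e)).1
  -- range characterization
  have hfix : Set.range π = {e : E | π e = e} := by
    ext e
    constructor
    · rintro ⟨f, rfl⟩; exact hx2 f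
    · intro h; exact ⟨e, h⟩
  refine ⟨hfix, ⟨⟨π A.zero, A.zero, rfl⟩, ?_, ?_⟩, ?_⟩
  · -- downward closed
    rintro a ⟨fa, rfl⟩ b ⟨x, hx⟩
    set a := π fa with ha
    have hpa : π a = a := hx2 fa
    obtain ⟨t, ht1, ht2⟩ := hA1 (π b) (A.exoCompl π b) x b a (hcompl b) hx
    have hbx := hx1 b x a hx
    rw [hpa] at hbx
    have htpx : t = π x := hcL (π b) t (π x) a ht2 hbx
    rw [htpx] at ht1
    -- x ≤ π x and π x ≤ x, so π x = x
    have hle1 : A.le x (π x) := (hconj _ _ _ ht1).2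
    have hxx : x = π x := gpea_le_antisymm hA hle1 (hx3 x)
    rw [← hxx] at ht1
    have hc0 : A.exoCompl π b = A.zero := hcR x _ _ x ht1 (hz x).2
    have hb := hcompl b
    rw [hc0] at hb
    exact ⟨b, hfn (π b) A.zero (π b) b (hz (π b)).1 hb⟩
  · -- closed under ⊕
    rintro a ⟨fa, rfl⟩ b ⟨fb, rfl⟩ s hs
    have h1 := hx1 _ _ _ hs
    rw [hx2, hx2] at h1
    exact ⟨s, hfn _ _ _ _ h1 hs⟩
  · intro e
    refine ⟨hcompl e, ?_⟩
    rintro e₁ e₂ ⟨f₁, rfl⟩ ⟨f₂, rfl⟩ h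
    have he1 : π (π f₁) = π f₁ := hx2 f₁
    have he2 : π (A.exoCompl π f₂) = A.zero := hcompl0 f₂
    have h1 := hx1 _ _ _ h
    rw [he1, he2] at h1
    have hpe : π e = π f₁ := hfn (π f₁) A.zero _ _ h1 (hz (π f₁)).1
    have he := hcompl e
    rw [hpe] at he
    exact ⟨hpe.symm, hcL (π f₁) _ _ e h he⟩
end

section
/- Let ξ,π belong to the exocenter ΓEX(E) of a generalized pseudoeffect algebra E. Then (i) ξ∘π = π∘ξ ∈ ΓEX(E), and (ii) ξ = ξ∘π iff ξe ≤ πe for all e ∈ E iff ξ(E) ⊆ π(E). -/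
/- Common framework: generalized pseudoeffect algebras (GPEAs), after
   Foulis, Pulmannová, Vinceková, "The exocenter and type decompositions for
   generalized pseudoeffect algebras".
   A partial binary operation ⊕ is represented by its graph
   `R : E → E → E → Prop`, where `R a b s` means "a ⊕ b is defined and equals s". -/

universe u v

open GPEApaper PartialAlg in
/-- Lemma 3.4: for ξ, π ∈ ΓEX(E): (i) ξ ∘ π = π ∘ ξ ∈ ΓEX(E);
(ii) ξ = ξ ∘ π ⇔ ξ e ≤ π e for all e ⇔ ξ(E) ⊆ π(E). -/
theorem stmt_6 {E : Type u} (A : PartialAlg E) (hA : A.IsGPEA)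
    (ξ π : E → E) (hξ : A.IsExo ξ) (hπ : A.IsExo π) :
    (ξ ∘ π = π ∘ ξ ∧ A.IsExo (ξ ∘ π)) ∧
    (ξ = ξ ∘ π ↔ ∀ e : E, A.le (ξ e) (π e)) ∧
    (ξ = ξ ∘ π ↔ Set.range ξ ⊆ Set.range π) := by
  obtain ⟨hsv, has1, has2, hconj, hcL, hcR, hpos, hz⟩ := hA
  -- basic order facts
  have letrans : ∀ a b c : E, A.le a b → A.le b c → A.le a c := by
    rintro a b c ⟨x, hx⟩ ⟨y, hy⟩
    obtain ⟨xy, _, h2⟩ := has1 a x y b c hx hy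
    exact ⟨xy, h2⟩
  have leantisymm : ∀ a b : E, A.le a b → A.le b a → a = b := by
    rintro a b ⟨x, hx⟩ ⟨y, hy⟩
    obtain ⟨xy, hxy, h2⟩ := has1 a x y b a hx hy
    have hxy0 : xy = A.zero := hcL a xy A.zero a h2 (hz a).1
    rw [hxy0] at hxy
    have hx0 : x = A.zero := (hpos x y hxy).1
    rw [hx0] at hx
    exact hsv a A.zero a b (hz a).1 hx
  have mono : ∀ σ : E → E, A.IsExo σ → ∀ a b : E, A.le a b → A.le (σ a) (σ b) := by
    rintro σ hσ a b ⟨x, hx⟩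
    exact ⟨σ x, hσ.1 a x b hx⟩
  -- downward closure of the fixed-point set of an exocentral map
  have fixdown : ∀ σ : E → E, A.IsExo σ → ∀ x z y : E, A.R x z y → σ y = y →
      σ x = x ∧ σ z = z := by
    intro σ hσ x z y hxzy hy
    have h1 : A.R (σ x) (σ z) y := by
      have := hσ.1 x z y hxzy
      rwa [hy] at this
    obtain ⟨a, ha⟩ := hσ.2.2.1 x   -- R (σ x) a x
    obtain ⟨az, haz, haz2⟩ := has1 (σ x) a z x y ha hxzy
    have haz' : az = σ z := hcL (σ x) az (σ z) y haz2 h1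
    rw [haz'] at haz   -- R a z (σ z)
    obtain ⟨b, hb⟩ := hσ.2.2.1 z   -- R (σ z) b z
    obtain ⟨zb, hzb, hzb2⟩ := has1 a z b (σ z) z haz hb
    have hle1 : A.le z zb := ⟨b, hzb⟩
    have hle2 : A.le zb z := (hconj a zb z hzb2).2
    have hzzb : z = zb := leantisymm z zb hle1 hle2
    rw [← hzzb] at hzb  -- R z b z
    have hb0 : b = A.zero := hcL z b A.zero z hzb (hz z).1
    rw [hb0] at hb   -- R (σ z) 0 z
    have hpz : σ z = z := hsv (σ z) A.zero (σ z) z (hz (σ z)).1 hb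
    rw [hpz] at haz  -- R a z z
    have ha0 : a = A.zero := hcR z a A.zero z haz (hz z).2
    rw [ha0] at ha   -- R (σ x) 0 x
    have hpx : σ x = x := hsv (σ x) A.zero (σ x) x (hz (σ x)).1 ha
    exact ⟨hpx, hpz⟩
  have fixle : ∀ σ : E → E, A.IsExo σ → ∀ x e : E, σ x = x → A.le x e →
      A.le x (σ e) := by
    intro σ hσ x e hx hle
    have := mono σ hσ x e hle
    rwa [hx] at this
  -- half of the commutativity
  have hhalf : ∀ ζ ρ : E → E, A.IsExo ζ → A.IsExo ρ → ∀ e : E,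
      A.le (ρ (ζ e)) (ζ (ρ e)) := by
    intro ζ ρ hζ hρ e
    have hx_le : A.le (ρ (ζ e)) (ζ e) := hρ.2.2.1 (ζ e)
    obtain ⟨c, hc⟩ := hρ.2.2.1 (ζ e)
    have hxfix : ζ (ρ (ζ e)) = ρ (ζ e) :=
      (fixdown ζ hζ (ρ (ζ e)) c (ζ e) hc (hζ.2.1 e)).1
    have hρx : ρ (ρ (ζ e)) = ρ (ζ e) := hρ.2.1 (ζ e)
    have hxe : A.le (ρ (ζ e)) e := letrans _ _ _ hx_le (hζ.2.2.1 e)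
    have h1 : A.le (ρ (ζ e)) (ρ e) := fixle ρ hρ _ e hρx hxe
    exact fixle ζ hζ _ (ρ e) hxfix h1
  have comm : ∀ e : E, ξ (π e) = π (ξ e) := fun e =>
    leantisymm (ξ (π e)) (π (ξ e)) (hhalf π ξ hπ hξ e) (hhalf ξ π hξ hπ e)
  -- ξ ∘ π is in the exocenter
  have exc2 : ∀ e : E, ξ (π (ξ (π e))) = ξ (π e) := by
    intro e
    obtain ⟨c, hc⟩ := hξ.2.2.1 (π e)   -- R (ξ (π e)) c (π e)
    have hπfix : π (ξ (π e)) = ξ (π e) :=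
      (fixdown π hπ (ξ (π e)) c (π e) hc (hπ.2.1 e)).1
    rw [hπfix]
    exact hξ.2.1 (π e)
  have exc3 : ∀ e : E, A.le (ξ (π e)) e :=
    fun e => letrans _ _ _ (hξ.2.2.1 (π e)) (hπ.2.2.1 e)
  have exc4 : ∀ e f : E, ξ (π e) = e → ξ (π f) = A.zero → A.perp e f := by
    intro e f he hf
    have h1 : A.le e (π e) := by
      have := hξ.2.2.1 (π e)
      rwa [he] at this
    have hπe : π e = e := leantisymm (π e) e (hπ.2.2.1 e) h1
    have hξe : ξ e = e := by rw [hπe] at he; exact he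
    obtain ⟨u, hu⟩ := hπ.2.2.1 f   -- R (π f) u f
    have h2 : A.R (π f) (π u) (π f) := by
      have := hπ.1 (π f) u f hu
      rwa [hπ.2.1 f] at this
    have hπu : π u = A.zero := hcL (π f) (π u) A.zero (π f) h2 (hz (π f)).1
    obtain ⟨t, hte1, hte2⟩ := hξ.2.2.2 e (π f) hξe hf
    -- π t = t
    have hπt : π t = t := by
      have h3 := hπ.1 (π f) e t hte2
      rw [hπ.2.1 f, hπe] at h3
      exact hsv (π f) e (π t) t h3 hte2
    obtain ⟨w, htw1, htw2⟩ := hπ.2.2.2 t u hπt hπu   -- R t u w ∧ R u t w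
    obtain ⟨s', hs'1, hs'2⟩ := has1 e (π f) u t w hte1 htw1
    have hs'f : s' = f := hsv (π f) u s' f hs'1 hu
    rw [hs'f] at hs'2   -- R e f w
    obtain ⟨ab, hab1, hab2⟩ := has2 u (π f) e t w hte2 htw2
    obtain ⟨f', hf'1, hf'2⟩ := hπ.2.2.2 (π f) u (hπ.2.1 f) hπu
    have hf'f : f' = f := hsv (π f) u f' f hf'1 hu
    rw [hf'f] at hf'2   -- R u (π f) f
    have habf : ab = f := hsv u (π f) ab f hab1 hf'2
    rw [habf] at hab2   -- R f e w
    exact ⟨w, hs'2, hab2⟩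
  -- the three conditions of (ii)
  have eq_to_le : ξ = ξ ∘ π → ∀ e : E, A.le (ξ e) (π e) := by
    intro h e
    have h1 : ξ e = ξ (π e) := congrFun h e
    rw [h1]
    exact hξ.2.2.1 (π e)
  have le_to_sub : (∀ e : E, A.le (ξ e) (π e)) → Set.range ξ ⊆ Set.range π := by
    intro h
    rintro _ ⟨e, rfl⟩
    obtain ⟨c, hc⟩ := h e
    exact ⟨ξ e, (fixdown π hπ (ξ e) c (π e) hc (hπ.2.1 e)).1⟩
  have sub_to_eq : Set.range ξ ⊆ Set.range π → ξ = ξ ∘ π := by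
    intro h
    funext e
    show ξ e = ξ (π e)
    obtain ⟨y, hy⟩ := h (Set.mem_range_self e)
    have hπξe : π (ξ e) = ξ e := by rw [← hy]; exact hπ.2.1 y
    have h1 : A.le (ξ e) (π e) := fixle π hπ (ξ e) e hπξe (hξ.2.2.1 e)
    have h2 : A.le (ξ e) (ξ (π e)) := fixle ξ hξ (ξ e) (π e) (hξ.2.1 e) h1
    have h3 : A.le (ξ (π e)) (ξ e) :=
      fixle ξ hξ (ξ (π e)) e (hξ.2.1 (π e)) (exc3 e)
    exact leantisymm _ _ h2 h3
  refine ⟨⟨funext comm, fun e f s hr => hξ.1 _ _ _ (hπ.1 e f s hr), exc2, exc3, exc4⟩,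
    ⟨eq_to_le, fun h => sub_to_eq (le_to_sub h)⟩,
    ⟨fun h => le_to_sub (eq_to_le h), sub_to_eq⟩⟩
end

section
/- The exocenter ΓEX(E) of a generalized pseudoeffect algebra E, partially ordered by ξ ≤ π iff ξ = ξ∘π (equivalently, ξe ≤ πe for all e ∈ E, equivalently ξ(E) ⊆ π(E)), is a boolean algebra with smallest element the zero map, largest element the identity map, boolean complementation π ↦ π′, meet π∧ξ = π∘ξ = ξ∘π, and join π∨ξ = (π′∘ξ′)′. -/
/- Common framework: generalized pseudoeffect algebras (GPEAs), after
   Foulis, Pulmannová, Vinceková, "The exocenter and type decompositions for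
   generalized pseudoeffect algebras".
   A partial binary operation ⊕ is represented by its graph
   `R : E → E → E → Prop`, where `R a b s` means "a ⊕ b is defined and equals s". -/

universe u v

namespace GPEApaper
namespace PartialAlg

universe u'

variable {E : Type u} {A : PartialAlg E} {π ξ : E → E}

namespace IsGPEA

theorem func (hA : A.IsGPEA) {a b c d : E} (h1 : A.R a b c) (h2 : A.R a b d) : c = d :=
  hA.1 a b c d h1 h2

theorem assoc1 (hA : A.IsGPEA) {a b c ab abc : E} (h1 : A.R a b ab) (h2 : A.R ab c abc) :
    ∃ bc, A.R b c bc ∧ A.R a bc abc := hA.2.1 a b c ab abc h1 h2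

theorem assoc2 (hA : A.IsGPEA) {a b c bc abc : E} (h1 : A.R b c bc) (h2 : A.R a bc abc) :
    ∃ ab, A.R a b ab ∧ A.R ab c abc := hA.2.2.1 a b c bc abc h1 h2

theorem conj (hA : A.IsGPEA) {a b s : E} (h : A.R a b s) :
    (∃ d, A.R d a s) ∧ ∃ e, A.R b e s := hA.2.2.2.1 a b s h

theorem cancL (hA : A.IsGPEA) {a b c s : E} (h1 : A.R a b s) (h2 : A.R a c s) : b = c :=
  hA.2.2.2.2.1 a b c s h1 h2

theorem cancR (hA : A.IsGPEA) {a b c s : E} (h1 : A.R b a s) (h2 : A.R c a s) : b = c :=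
  hA.2.2.2.2.2.1 a b c s h1 h2

theorem pos (hA : A.IsGPEA) {a b : E} (h : A.R a b A.zero) : a = A.zero ∧ b = A.zero :=
  hA.2.2.2.2.2.2.1 a b h

theorem zr (hA : A.IsGPEA) (a : E) : A.R a A.zero a := (hA.2.2.2.2.2.2.2 a).1
theorem zl (hA : A.IsGPEA) (a : E) : A.R A.zero a a := (hA.2.2.2.2.2.2.2 a).2

theorem zero_right (hA : A.IsGPEA) {a s : E} (h : A.R a A.zero s) : s = a :=
  hA.func h (hA.zr a)

theorem zero_left (hA : A.IsGPEA) {a s : E} (h : A.R A.zero a s) : s = a :=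
  hA.func h (hA.zl a)

theorem le_refl' (hA : A.IsGPEA) (a : E) : A.le a a := ⟨A.zero, hA.zr a⟩

theorem le_trans' (hA : A.IsGPEA) {a b c : E} (h1 : A.le a b) (h2 : A.le b c) : A.le a c := by
  obtain ⟨x, hx⟩ := h1
  obtain ⟨y, hy⟩ := h2
  obtain ⟨t, _, ht⟩ := hA.assoc1 hx hy
  exact ⟨t, ht⟩

theorem le_antisymm' (hA : A.IsGPEA) {a b : E} (h1 : A.le a b) (h2 : A.le b a) : a = b := by
  obtain ⟨x, hx⟩ := h1
  obtain ⟨y, hy⟩ := h2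
  obtain ⟨t, ht1, ht2⟩ := hA.assoc1 hx hy
  have ht0 : t = A.zero := hA.cancL ht2 (hA.zr a)
  rw [ht0] at ht1
  have hx0 : x = A.zero := (hA.pos ht1).1
  rw [hx0] at hx
  exact (hA.zero_right hx).symm

end IsGPEA

theorem rdiv_spec {a b : E} (h : A.le a b) : A.R a (A.rdiv a b) b := by
  letI : Nonempty E := ⟨A.zero⟩
  exact Classical.epsilon_spec h

theorem IsGPEA.rdiv_eq (hA : A.IsGPEA) {a x b : E} (h : A.R a x b) : A.rdiv a b = x :=
  hA.cancL (rdiv_spec ⟨x, h⟩) h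

theorem exo_add (hπ : A.IsExo π) {e f s : E} (h : A.R e f s) : A.R (π e) (π f) (π s) :=
  hπ.1 e f s h

theorem exo_idem (hπ : A.IsExo π) (e : E) : π (π e) = π e := hπ.2.1 e

theorem exo_le (hπ : A.IsExo π) (e : E) : A.le (π e) e := hπ.2.2.1 e

theorem exo_perp (hπ : A.IsExo π) {e f : E} (h1 : π e = e) (h2 : π f = A.zero) :
    A.perp e f := hπ.2.2.2 e f h1 h2

theorem decomp (hπ : A.IsExo π) (e : E) : A.R (π e) (A.exoCompl π e) e :=
  rdiv_spec (exo_le hπ e)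

namespace IsGPEA

theorem exo_zero (hA : A.IsGPEA) (hπ : A.IsExo π) : π A.zero = A.zero := by
  have h := exo_add hπ (hA.zr A.zero)
  exact hA.cancL h (hA.zr (π A.zero))

theorem ppc (hA : A.IsGPEA) (hπ : A.IsExo π) (e : E) : π (A.exoCompl π e) = A.zero := by
  have h := exo_add hπ (decomp hπ e)
  rw [exo_idem hπ] at h
  exact hA.cancL h (hA.zr (π e))

theorem ppc' (hA : A.IsGPEA) (hπ : A.IsExo π) (e : E) : A.exoCompl π (π e) = A.zero := by
  show A.rdiv (π (π e)) (π e) = A.zero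
  rw [exo_idem hπ]
  exact hA.rdiv_eq (hA.zr (π e))

theorem pdecomp (hA : A.IsGPEA) (hπ : A.IsExo π) (e : E) :
    A.R (A.exoCompl π e) (π e) e := by
  obtain ⟨s, h1, h2⟩ := exo_perp hπ (exo_idem hπ e) (hA.ppc hπ e)
  rwa [hA.func h1 (decomp hπ e)] at h2

theorem compl_fix (hA : A.IsGPEA) {a : E} (h : π a = A.zero) : A.exoCompl π a = a := by
  show A.rdiv (π a) a = a
  rw [h]
  exact hA.rdiv_eq (hA.zl a)

theorem compl_kill (hA : A.IsGPEA) {a : E} (h : π a = a) : A.exoCompl π a = A.zero := by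
  show A.rdiv (π a) a = A.zero
  rw [h]
  exact hA.rdiv_eq (hA.zr a)

theorem compl_compl (hA : A.IsGPEA) (hπ : A.IsExo π) (e : E) :
    A.exoCompl (A.exoCompl π) e = π e :=
  hA.rdiv_eq (hA.pdecomp hπ e)

theorem fix_of_le (hA : A.IsGPEA) (hπ : A.IsExo π) {x y : E} (hx : π x = x)
    (hyx : A.le y x) : π y = y := by
  have h1 : A.le (A.exoCompl π y) x := hA.le_trans' ⟨π y, hA.pdecomp hπ y⟩ hyx
  obtain ⟨w, hw⟩ := h1
  have h2 := exo_add hπ hw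
  rw [hA.ppc hπ, hx] at h2
  have hwx : x = π w := hA.zero_left h2
  have h3 : A.le w x := (hA.conj hw).2
  have h4 : A.le x w := by rw [hwx]; exact exo_le hπ w
  have h5 : w = x := hA.le_antisymm' h3 h4
  rw [h5] at hw
  have h6 : A.exoCompl π y = A.zero := hA.cancR hw (hA.zl x)
  have h7 := decomp hπ y
  rw [h6] at h7
  exact (hA.zero_right h7).symm

theorem kill_of_le (hA : A.IsGPEA) (hπ : A.IsExo π) {x y : E} (hx : π x = A.zero)
    (hyx : A.le y x) : π y = A.zero := by
  obtain ⟨z, hz1⟩ := hyx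
  have h := exo_add hπ hz1
  rw [hx] at h
  exact (hA.pos h).1

theorem comm (hA : A.IsGPEA) (hπ : A.IsExo π) (hξ : A.IsExo ξ) (e : E) :
    π (ξ e) = ξ (π e) := by
  have h2 := exo_add hξ (exo_add hπ (decomp hξ e))
  rw [hA.fix_of_le hξ (exo_idem hξ e) (exo_le hπ (ξ e)),
    hA.kill_of_le hξ (hA.ppc hξ e) (exo_le hπ (A.exoCompl ξ e))] at h2
  exact (hA.zero_right h2).symm

theorem compl_isExo (hA : A.IsGPEA) (hπ : A.IsExo π) : A.IsExo (A.exoCompl π) := by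
  refine ⟨?_, ?_, ?_, ?_⟩
  · intro e f s h
    have hde := decomp hπ e
    have hdf := decomp hπ f
    have hds := decomp hπ s
    have hsum := exo_add hπ h
    obtain ⟨t1, h1, h2⟩ := hA.assoc1 hde h
    obtain ⟨t2, h3, h4⟩ := hA.assoc2 hdf h1
    obtain ⟨u, h5, h6⟩ := exo_perp hπ (exo_idem hπ f) (hA.ppc hπ e)
    rw [hA.func h6 h3] at h5
    obtain ⟨t3, h7, h8⟩ := hA.assoc1 h5 h4
    obtain ⟨v, h9, h10⟩ := hA.assoc2 h8 h2
    rw [hA.func h9 hsum] at h10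
    rwa [hA.cancL h10 hds] at h7
  · intro e
    exact hA.compl_fix (hA.ppc hπ e)
  · intro e
    exact ⟨π e, hA.pdecomp hπ e⟩
  · intro e f he hf
    have hpe : π e = A.zero := by
      have h := decomp hπ e
      rw [he] at h
      exact hA.cancR h (hA.zl e)
    have hpf : π f = f := by
      have h := decomp hπ f
      rw [hf] at h
      exact (hA.zero_right h).symm
    obtain ⟨s, h1, h2⟩ := exo_perp hπ hpf hpe
    exact ⟨s, h2, h1⟩

theorem comp_isExo (hA : A.IsGPEA) (hπ : A.IsExo π) (hξ : A.IsExo ξ) :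
    A.IsExo (π ∘ ξ) := by
  refine ⟨fun e f s h => exo_add hπ (exo_add hξ h), ?_, ?_, ?_⟩
  · intro e
    show π (ξ (π (ξ e))) = π (ξ e)
    rw [hA.fix_of_le hξ (exo_idem hξ e) (exo_le hπ (ξ e))]
    exact exo_idem hπ (ξ e)
  · intro e
    exact hA.le_trans' (exo_le hπ (ξ e)) (exo_le hξ e)
  · intro e f he hf
    have he' : π (ξ e) = e := he
    have hf' : π (ξ f) = A.zero := hf
    have hle : A.le e (ξ e) := by
      have h := exo_le hπ (ξ e)
      rwa [he'] at h
    have hξe : ξ e = e := hA.le_antisymm' (exo_le hξ e) hle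
    have hπe : π e = e := by
      calc π e = π (ξ e) := by rw [hξe]
        _ = e := he'
    obtain ⟨v, hv1, hv2⟩ := exo_perp hπ hπe hf'
    have hξv : ξ v = v := by
      have h := exo_add hξ hv1
      rw [hξe, exo_idem hξ] at h
      exact hA.func h hv1
    obtain ⟨w, hw1, hw2⟩ := exo_perp hξ hξv (hA.ppc hξ f)
    have hdf := decomp hξ f
    obtain ⟨t, ht1, ht2⟩ := hA.assoc1 hv1 hw1
    rw [hA.func ht1 hdf] at ht2
    obtain ⟨p, hp1, hp2⟩ := exo_perp hξ (exo_idem hξ f) (hA.ppc hξ f)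
    rw [hA.func hp1 hdf] at hp2
    obtain ⟨u, hu1, hu2⟩ := hA.assoc2 hv2 hw2
    rw [hA.func hu1 hp2] at hu2
    exact ⟨w, ht2, hu2⟩

theorem zero_imp (hA : A.IsGPEA) (hξ : A.IsExo ξ) (hπ : A.IsExo π)
    (h : ∀ e, ξ (π e) = A.zero) (e : E) : ξ (A.exoCompl π e) = ξ e := by
  have h2 := exo_add hξ (decomp hπ e)
  rw [h e] at h2
  exact hA.cancL h2 (hA.zl (ξ e))

theorem zero_imp' (hA : A.IsGPEA) (hξ : A.IsExo ξ) (hπ : A.IsExo π)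
    (h : ∀ e, ξ (A.exoCompl π e) = A.zero) (e : E) : ξ (π e) = ξ e := by
  have h2 := exo_add hξ (hA.pdecomp hπ e)
  rw [h e] at h2
  exact hA.cancL h2 (hA.zl (ξ e))

theorem fix_imp (hA : A.IsGPEA) (hξ : A.IsExo ξ) (hπ : A.IsExo π)
    (h : ∀ e, ξ (π e) = ξ e) (e : E) : ξ (A.exoCompl π e) = A.zero := by
  have h1 := h (A.exoCompl π e)
  rw [hA.ppc hπ, hA.exo_zero hξ] at h1
  exact h1.symm

theorem zero_parts (hA : A.IsGPEA) (hξ : A.IsExo ξ) (hπ : A.IsExo π)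
    (h1 : ∀ e, ξ (π e) = A.zero) (h2 : ∀ e, ξ (A.exoCompl π e) = A.zero) (e : E) :
    ξ e = A.zero := by
  have h3 := exo_add hξ (decomp hπ e)
  rw [h1 e, h2 e] at h3
  exact hA.zero_left h3

theorem id_isExo (hA : A.IsGPEA) : A.IsExo (fun e : E => e) := by
  refine ⟨fun e f s h => h, fun e => rfl, fun e => hA.le_refl' e, ?_⟩
  intro e f _ hf
  have hf' : f = A.zero := hf
  rw [hf']
  exact ⟨e, hA.zr e, hA.zl e⟩

theorem bot_isExo (hA : A.IsGPEA) : A.IsExo (fun _ : E => A.zero) := by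
  refine ⟨fun e f s h => hA.zr A.zero, fun e => rfl, fun e => ⟨e, hA.zl e⟩, ?_⟩
  intro e f he _
  have he' : A.zero = e := he
  rw [← he']
  exact ⟨f, hA.zl f, hA.zr f⟩

end IsGPEA

theorem exoLe_iff {ξ π : E → E} : A.exoLe ξ π ↔ ∀ e, ξ (π e) = ξ e :=
  ⟨fun h e => (congrFun h e).symm, fun h => funext fun e => (h e).symm⟩

end PartialAlg
end GPEApaper

namespace GPEApaper
namespace PartialAlg

variable {E : Type u} {A : PartialAlg E}

theorem IsGPEA.key (hA : A.IsGPEA) {x y z W X Z : E → E}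
    (hx : A.IsExo x) (hy : A.IsExo y) (hz : A.IsExo z)
    (hW : A.IsExo W) (hX : A.IsExo X) (hZ : A.IsExo Z)
    (hWa : ∀ u, W (y (z u)) = A.zero)
    (hXa : ∀ u, X (A.exoCompl x (A.exoCompl y u)) = A.zero)
    (hZa : ∀ u, Z (A.exoCompl x (A.exoCompl z u)) = A.zero) :
    ∀ e, X (Z (A.exoCompl x (W e))) = A.zero := by
  have hx' := hA.compl_isExo hx
  have hy' := hA.compl_isExo hy
  have hσ : A.IsExo (X ∘ (Z ∘ (A.exoCompl x ∘ W))) :=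
    hA.comp_isExo hX (hA.comp_isExo hZ (hA.comp_isExo hx' hW))
  have h2 : ∀ e, X (Z (A.exoCompl x (W (A.exoCompl z e)))) = A.zero := by
    intro e
    rw [hA.comm hx' hW (A.exoCompl z e)]
    rw [hA.comm hZ hW (A.exoCompl x (A.exoCompl z e))]
    rw [hZa e, hA.exo_zero hW, hA.exo_zero hX]
  have h1a : ∀ e, X (Z (A.exoCompl x (W (z (y e))))) = A.zero := by
    intro e
    rw [hA.comm hz hy e, hWa e, hA.exo_zero hx', hA.exo_zero hZ, hA.exo_zero hX]
  have h1b : ∀ e, X (Z (A.exoCompl x (W (z (A.exoCompl y e))))) = A.zero := by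
    intro e
    rw [hA.comm hz hy' e]
    rw [hA.comm hW hy' (z e)]
    rw [hA.comm hZ hx' (A.exoCompl y (W (z e)))]
    rw [hA.comm hZ hy' (W (z e))]
    rw [hXa (Z (W (z e)))]
  have h1 : ∀ e, X (Z (A.exoCompl x (W (z e)))) = A.zero :=
    hA.zero_parts (ξ := (X ∘ (Z ∘ (A.exoCompl x ∘ W))) ∘ z) (π := y)
      (hA.comp_isExo hσ hz) hy h1a h1b
  exact hA.zero_parts (ξ := X ∘ (Z ∘ (A.exoCompl x ∘ W))) (π := z) hσ hz h1 h2

noncomputable def exoBA (A : PartialAlg E) (hA : A.IsGPEA) :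
    BooleanAlgebra {π : E → E // A.IsExo π} where
  le ξ π := A.exoLe ξ.1 π.1
  le_refl π := funext fun e => (exo_idem π.2 e).symm
  le_trans ξ π ρ h1 h2 := by
    refine exoLe_iff.mpr fun e => ?_
    have p1 := exoLe_iff.mp h1
    have p2 := exoLe_iff.mp h2
    calc ξ.1 (ρ.1 e) = ξ.1 (π.1 (ρ.1 e)) := (p1 (ρ.1 e)).symm
      _ = ξ.1 (π.1 e) := by rw [p2 e]
      _ = ξ.1 e := p1 e
  le_antisymm ξ π h1 h2 := by
    have p1 := exoLe_iff.mp h1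
    have p2 := exoLe_iff.mp h2
    refine Subtype.ext (funext fun e => ?_)
    calc ξ.1 e = ξ.1 (π.1 e) := (p1 e).symm
      _ = π.1 (ξ.1 e) := (hA.comm ξ.2 π.2 e)
      _ = π.1 e := p2 e
  inf π ξ := ⟨π.1 ∘ ξ.1, hA.comp_isExo π.2 ξ.2⟩
  inf_le_left π ξ := by
    refine exoLe_iff.mpr fun e => ?_
    show π.1 (ξ.1 (π.1 e)) = π.1 (ξ.1 e)
    rw [← hA.comm π.2 ξ.2 e]
    exact exo_idem π.2 (ξ.1 e)
  inf_le_right π ξ := by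
    refine exoLe_iff.mpr fun e => ?_
    show π.1 (ξ.1 (ξ.1 e)) = π.1 (ξ.1 e)
    rw [exo_idem ξ.2 e]
  le_inf ρ π ξ h1 h2 := by
    refine exoLe_iff.mpr fun e => ?_
    have p1 := exoLe_iff.mp h1
    have p2 := exoLe_iff.mp h2
    show ρ.1 (π.1 (ξ.1 e)) = ρ.1 e
    rw [p1 (ξ.1 e), p2 e]
  sup π ξ := ⟨A.exoSup π.1 ξ.1,
    hA.compl_isExo (hA.comp_isExo (hA.compl_isExo π.2) (hA.compl_isExo ξ.2))⟩
  le_sup_left π ξ := by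
    have hτ : A.IsExo (A.exoCompl π.1 ∘ A.exoCompl ξ.1) :=
      hA.comp_isExo (hA.compl_isExo π.2) (hA.compl_isExo ξ.2)
    have hz0 : ∀ u, π.1 ((A.exoCompl π.1 ∘ A.exoCompl ξ.1) u) = A.zero :=
      fun u => hA.ppc π.2 (A.exoCompl ξ.1 u)
    exact exoLe_iff.mpr (hA.zero_imp π.2 hτ hz0)
  le_sup_right π ξ := by
    have hπ' := hA.compl_isExo π.2
    have hτ : A.IsExo (A.exoCompl π.1 ∘ A.exoCompl ξ.1) :=
      hA.comp_isExo hπ' (hA.compl_isExo ξ.2)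
    have hz0 : ∀ u, ξ.1 ((A.exoCompl π.1 ∘ A.exoCompl ξ.1) u) = A.zero := by
      intro u
      show ξ.1 (A.exoCompl π.1 (A.exoCompl ξ.1 u)) = A.zero
      rw [hA.comm ξ.2 hπ' (A.exoCompl ξ.1 u), hA.ppc ξ.2 u]
      exact hA.exo_zero hπ'
    exact exoLe_iff.mpr (hA.zero_imp ξ.2 hτ hz0)
  sup_le π ξ β h1 h2 := by
    have hπ' := hA.compl_isExo π.2
    have hξ' := hA.compl_isExo ξ.2
    have hβ' := hA.compl_isExo β.2
    have hτ : A.IsExo (A.exoCompl π.1 ∘ A.exoCompl ξ.1) := hA.comp_isExo hπ' hξ'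
    have hτ' := hA.compl_isExo hτ
    have q1 : ∀ e, π.1 (A.exoCompl β.1 e) = A.zero :=
      hA.fix_imp π.2 β.2 (exoLe_iff.mp h1)
    have q2 : ∀ e, ξ.1 (A.exoCompl β.1 e) = A.zero :=
      hA.fix_imp ξ.2 β.2 (exoLe_iff.mp h2)
    have r1 : ∀ e, A.exoCompl β.1 (π.1 e) = A.zero :=
      fun e => (hA.comm π.2 hβ' e).symm.trans (q1 e)
    have r2 : ∀ e, A.exoCompl β.1 (ξ.1 e) = A.zero :=
      fun e => (hA.comm ξ.2 hβ' e).symm.trans (q2 e)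
    have s1 := hA.zero_imp hβ' π.2 r1
    have s2 := hA.zero_imp hβ' ξ.2 r2
    have t : ∀ e, A.exoCompl β.1 ((A.exoCompl π.1 ∘ A.exoCompl ξ.1) e) = A.exoCompl β.1 e :=
      fun e => (s1 (A.exoCompl ξ.1 e)).trans (s2 e)
    have u : ∀ e, A.exoCompl β.1 (A.exoCompl (A.exoCompl π.1 ∘ A.exoCompl ξ.1) e) = A.zero :=
      hA.fix_imp hβ' hτ t
    have v : ∀ e, A.exoCompl (A.exoCompl π.1 ∘ A.exoCompl ξ.1) (A.exoCompl β.1 e) = A.zero :=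
      fun e => (hA.comm hτ' hβ' e).trans (u e)
    exact exoLe_iff.mpr (hA.zero_imp' hτ' β.2 v)
  le_sup_inf x y z := by
    have hx' := hA.compl_isExo x.2
    have hy' := hA.compl_isExo y.2
    have hz' := hA.compl_isExo z.2
    have hW : A.IsExo (A.exoCompl (y.1 ∘ z.1)) :=
      hA.compl_isExo (hA.comp_isExo y.2 z.2)
    have hX : A.IsExo (A.exoCompl (A.exoCompl x.1 ∘ A.exoCompl y.1)) :=
      hA.compl_isExo (hA.comp_isExo hx' hy')
    have hZ : A.IsExo (A.exoCompl (A.exoCompl x.1 ∘ A.exoCompl z.1)) :=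
      hA.compl_isExo (hA.comp_isExo hx' hz')
    have hXZ : A.IsExo (A.exoCompl (A.exoCompl x.1 ∘ A.exoCompl y.1) ∘
        A.exoCompl (A.exoCompl x.1 ∘ A.exoCompl z.1)) := hA.comp_isExo hX hZ
    have hρ : A.IsExo (A.exoCompl x.1 ∘ A.exoCompl (y.1 ∘ z.1)) :=
      hA.comp_isExo hx' hW
    have hkey := hA.key x.2 y.2 z.2 hW hX hZ
      (fun u => hA.ppc' (hA.comp_isExo y.2 z.2) u)
      (fun u => hA.ppc' (hA.comp_isExo hx' hy') u)
      (fun u => hA.ppc' (hA.comp_isExo hx' hz') u)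
    have hkey' : ∀ e, (A.exoCompl (A.exoCompl x.1 ∘ A.exoCompl y.1) ∘
        A.exoCompl (A.exoCompl x.1 ∘ A.exoCompl z.1))
        ((A.exoCompl x.1 ∘ A.exoCompl (y.1 ∘ z.1)) e) = A.zero := hkey
    exact exoLe_iff.mpr (hA.zero_imp hXZ hρ hkey')
  top := ⟨fun e => e, hA.id_isExo⟩
  bot := ⟨fun _ => A.zero, hA.bot_isExo⟩
  le_top π := rfl
  bot_le π := rfl
  compl π := ⟨A.exoCompl π.1, hA.compl_isExo π.2⟩
  inf_compl_le_bot π := by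
    show A.exoLe (π.1 ∘ A.exoCompl π.1) _
    refine funext fun e => ?_
    show π.1 (A.exoCompl π.1 e) = π.1 (A.exoCompl π.1 A.zero)
    rw [hA.ppc π.2 e, hA.ppc π.2 A.zero]
  top_le_sup_compl π := by
    refine funext fun e => ?_
    show e = A.rdiv (A.exoCompl π.1 (A.exoCompl (A.exoCompl π.1) e)) e
    rw [hA.ppc (hA.compl_isExo π.2) e]
    exact (hA.rdiv_eq (hA.zl e)).symm
  sdiff_eq _ _ := rfl
  himp_eq _ _ := rfl

end PartialAlg
end GPEApaper


open GPEApaper PartialAlg in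
/-- Theorem 3.5: ΓEX(E), partially ordered by ξ ≤ π ⇔ ξ = ξ ∘ π
(⇔ ξ e ≤ π e for all e ⇔ ξ(E) ⊆ π(E)), is a boolean algebra with smallest
element the zero map, largest element the identity, complementation π ↦ π′,
meet π ∧ ξ = π ∘ ξ = ξ ∘ π, and join π ∨ ξ = (π′ ∘ ξ′)′. -/
theorem stmt_7 {E : Type u} (A : PartialAlg E) (hA : A.IsGPEA) :
    ∃ B : BooleanAlgebra {π : E → E // A.IsExo π}, letI := B;
      (∀ ξ π : {π : E → E // A.IsExo π}, ξ ≤ π ↔ A.exoLe ξ.1 π.1) ∧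
      (∀ ξ π : {π : E → E // A.IsExo π}, ξ ≤ π ↔ ∀ e : E, A.le (ξ.1 e) (π.1 e)) ∧
      (∀ ξ π : {π : E → E // A.IsExo π}, ξ ≤ π ↔ Set.range ξ.1 ⊆ Set.range π.1) ∧
      ((⊥ : {π : E → E // A.IsExo π}).1 = fun _ => A.zero) ∧
      ((⊤ : {π : E → E // A.IsExo π}).1 = fun e => e) ∧
      (∀ π : {π : E → E // A.IsExo π}, (πᶜ).1 = A.exoCompl π.1) ∧
      (∀ π ξ : {π : E → E // A.IsExo π}, (π ⊓ ξ).1 = π.1 ∘ ξ.1) ∧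
      (∀ π ξ : {π : E → E // A.IsExo π}, (π ⊓ ξ).1 = ξ.1 ∘ π.1) ∧
      (∀ π ξ : {π : E → E // A.IsExo π},
        (π ⊔ ξ).1 = A.exoCompl (A.exoCompl π.1 ∘ A.exoCompl ξ.1)) := by
  refine ⟨exoBA A hA, fun ξ π => Iff.rfl, ?_, ?_, rfl, rfl, fun π => rfl,
    fun π ξ => rfl, ?_, fun π ξ => rfl⟩
  · intro ξ π
    constructor
    · intro h e
      have p := exoLe_iff.mp h e
      rw [← p]
      exact exo_le ξ.2 (π.1 e)
    · intro h
      refine exoLe_iff.mpr fun e => ?_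
      have h1 : π.1 (ξ.1 e) = ξ.1 e := hA.fix_of_le π.2 (exo_idem π.2 e) (h e)
      rw [hA.comm π.2 ξ.2 e] at h1
      exact h1
  · intro ξ π
    constructor
    · intro h yy hy
      obtain ⟨e, rfl⟩ := hy
      refine ⟨ξ.1 e, ?_⟩
      calc π.1 (ξ.1 e) = ξ.1 (π.1 e) := hA.comm π.2 ξ.2 e
        _ = ξ.1 e := exoLe_iff.mp h e
    · intro h
      refine exoLe_iff.mpr fun e => ?_
      obtain ⟨x, hx⟩ := h ⟨e, rfl⟩
      have h1 : π.1 (ξ.1 e) = ξ.1 e := by rw [← hx, exo_idem π.2]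
      rw [hA.comm π.2 ξ.2 e] at h1
      exact h1
  · intro π ξ
    exact funext fun e => hA.comm π.2 ξ.2 e
end

section
/- Let E be a generalized pseudoeffect algebra and S ⊆ E. Then S is a central ideal (direct summand) of E if and only if there exists π in the exocenter ΓEX(E) such that S = π(E). -/
/- Common framework: generalized pseudoeffect algebras (GPEAs), after
   Foulis, Pulmannová, Vinceková, "The exocenter and type decompositions for
   generalized pseudoeffect algebras".
   A partial binary operation ⊕ is represented by its graph
   `R : E → E → E → Prop`, where `R a b s` means "a ⊕ b is defined and equals s". -/

universe u v

open GPEApaper PartialAlg in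
/-- Theorem 3.9: S ⊆ E is a central ideal (direct summand) of E iff
S = π(E) for some π in the exocenter ΓEX(E). -/
theorem stmt_8 {E : Type u} (A : PartialAlg E) (hA : A.IsGPEA) (S : Set E) :
    A.IsCentralIdeal S ↔ ∃ π : E → E, A.IsExo π ∧ S = Set.range π := by
  obtain ⟨func, assoc1, assoc2, conj, cancelL, cancelR, pos, zax⟩ := hA
  -- antisymmetry of the induced order
  have antisym : ∀ a b : E, A.le a b → A.le b a → a = b := by
    rintro a b ⟨x, hx⟩ ⟨y, hy⟩
    obtain ⟨xy, hxy, hxy2⟩ := assoc1 a x y b a hx hy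
    have h0 : xy = A.zero := cancelL a xy A.zero a hxy2 (zax a).1
    obtain ⟨hx0, _⟩ := pos x y (h0 ▸ hxy)
    subst hx0
    exact (func a A.zero a b (zax a).1 hx)
  constructor
  · -- central ideal → exocenter element
    rintro ⟨S', ⟨⟨⟨s0, hs0⟩, hSdown, hSsum⟩, ⟨⟨s0', hs0'⟩, hS'down, hS'sum⟩, horth, hdec⟩⟩
    have h0S : A.zero ∈ S := hSdown s0 hs0 A.zero ⟨s0, (zax s0).2⟩
    have h0S' : A.zero ∈ S' := hS'down s0' hs0' A.zero ⟨s0', (zax s0').2⟩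
    -- the projection onto S
    set π : E → E := fun a => ((hdec a).choose).1 with hπdef
    set σ : E → E := fun a => ((hdec a).choose).2 with hσdef
    have hmem : ∀ a : E, π a ∈ S ∧ σ a ∈ S' ∧ A.R (π a) (σ a) a := fun a =>
      (hdec a).choose_spec.1
    have huniq : ∀ a p q : E, p ∈ S → q ∈ S' → A.R p q a → π a = p ∧ σ a = q := by
      intro a p q hp hq hR
      have h : (p, q) = (hdec a).choose := (hdec a).choose_spec.2 (p, q) ⟨hp, hq, hR⟩
      exact ⟨(congrArg Prod.fst h).symm, (congrArg Prod.snd h).symm⟩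
    have hfix : ∀ s ∈ S, π s = s := fun s hs => (huniq s s A.zero hs h0S' (zax s).1).1
    refine ⟨π, ⟨?_, ?_, ?_, ?_⟩, ?_⟩
    · -- EXC1
      intro e f s hRef
      obtain ⟨he₁, he₂, hee⟩ := hmem e
      obtain ⟨hf₁, hf₂, hff⟩ := hmem f
      obtain ⟨u, hu1, hu2⟩ := assoc1 (π e) (σ e) f e s hee hRef
      obtain ⟨v, hv1, hv2⟩ := assoc2 (σ e) (π f) (σ f) f u hff hu1
      obtain ⟨t, ht1, ht2⟩ := horth (π f) hf₁ (σ e) he₂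
      have htv : t = v := func (σ e) (π f) t v ht2 hv1
      obtain ⟨w, hw1, hw2⟩ := assoc1 (π f) (σ e) (σ f) v u (htv ▸ ht1) hv2
      obtain ⟨p, hp1, hp2⟩ := assoc2 (π e) (π f) w u s hw2 hu2
      have hpS : p ∈ S := hSsum (π e) he₁ (π f) hf₁ p hp1
      have hwS' : w ∈ S' := hS'sum (σ e) he₂ (σ f) hf₂ w hw1
      have := (huniq s p w hpS hwS' hp2).1
      rw [this]
      exact hp1
    · -- EXC2
      intro e
      exact hfix (π e) (hmem e).1
    · -- EXC3
      intro e
      exact ⟨σ e, (hmem e).2.2⟩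
    · -- EXC4
      intro e f he hf
      have heS : e ∈ S := he ▸ (hmem e).1
      have hfS' : f ∈ S' := by
        have h1 : A.R A.zero (σ f) f := hf ▸ (hmem f).2.2
        have h2 : σ f = f := cancelL A.zero (σ f) f f h1 (zax f).2
        exact h2 ▸ (hmem f).2.1
      exact horth e heS f hfS'
    · -- S = range π
      ext a
      constructor
      · intro ha; exact ⟨a, hfix a ha⟩
      · rintro ⟨b, rfl⟩; exact (hmem b).1
  · -- exocenter element → central ideal
    rintro ⟨π, ⟨exc1, exc2, exc3, exc4⟩, rfl⟩
    have hπ0 : π A.zero = A.zero := by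
      obtain ⟨x, hx⟩ := exc3 A.zero
      exact (pos (π A.zero) x hx).1
    have hfix : ∀ e ∈ Set.range π, π e = e := by
      rintro e ⟨b, rfl⟩; exact exc2 b
    -- complement: for each a, a = π a ⊕ c with π c = 0
    have hcompl : ∀ a : E, ∃ c, A.R (π a) c a ∧ π c = A.zero := by
      intro a
      obtain ⟨c, hc⟩ := exc3 a
      refine ⟨c, hc, ?_⟩
      have h1 : A.R (π (π a)) (π c) (π a) := exc1 (π a) c a hc
      rw [exc2] at h1
      exact cancelL (π a) (π c) A.zero (π a) h1 (zax (π a)).1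
    -- downward closure of the fixed-point set
    have hdown : ∀ a b : E, π a = a → A.le b a → π b = b := by
      rintro a b ha ⟨x, hx⟩
      obtain ⟨c, hc, _⟩ := hcompl b
      obtain ⟨u, hu1, hu2⟩ := assoc1 (π b) c x b a hc hx
      have hpx : A.R (π b) (π x) a := by
        have := exc1 b x a hx; rwa [ha] at this
      have hux : u = π x := cancelL (π b) u (π x) a hu2 hpx
      rw [hux] at hu1
      have hxle : A.le x (π x) := (conj c x (π x) hu1).2
      have hxeq : x = π x := antisym x (π x) hxle (exc3 x)
      rw [← hxeq] at hu1
      have hc0 : c = A.zero := cancelR x c A.zero x hu1 (zax x).2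
      rw [hc0] at hc
      exact (func (π b) A.zero (π b) b (zax (π b)).1 hc)
    refine ⟨{e | π e = A.zero}, ⟨⟨A.zero, A.zero, hπ0⟩, ?_, ?_⟩,
      ⟨⟨A.zero, hπ0⟩, ?_, ?_⟩, ?_, ?_⟩
    · -- range π downward closed
      intro a ha b hb
      exact ⟨b, hdown a b (hfix a ha) hb⟩
    · -- range π closed under ⊕
      intro a ha b hb s hs
      have h1 : A.R (π a) (π b) (π s) := exc1 a b s hs
      rw [hfix a ha, hfix b hb] at h1
      exact ⟨s, func a b (π s) s h1 hs⟩
    · -- kernel downward closed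
      rintro a ha b ⟨x, hx⟩
      have h1 : A.R (π b) (π x) (π a) := exc1 b x a hx
      rw [ha] at h1
      exact (pos (π b) (π x) h1).1
    · -- kernel closed under ⊕
      intro a ha b hb s hs
      have h1 : A.R (π a) (π b) (π s) := exc1 a b s hs
      rw [ha, hb] at h1
      exact (func A.zero A.zero (π s) A.zero h1 (zax A.zero).1)
    · -- orthogonality
      intro a ha b hb
      exact exc4 a b (hfix a ha) hb
    · -- unique decomposition
      intro a
      obtain ⟨c, hc, hc0⟩ := hcompl a
      refine ⟨(π a, c), ⟨⟨a, rfl⟩, hc0, hc⟩, ?_⟩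
      rintro ⟨p, q⟩ ⟨hp, hq, hR⟩
      have hp' : π p = p := hfix p hp
      have h1 : A.R (π p) (π q) (π a) := exc1 p q a hR
      rw [hp', hq] at h1
      have hpa : π a = p := (func p A.zero p (π a) (zax p).1 h1).symm
      have hqc : q = c := cancelL p q c a hR (hpa ▸ hc)
      rw [hpa, hqc]
end

section
/- Let π belong to the exocenter ΓEX(E) of a generalized pseudoeffect algebra E and let (e_i)_{i∈I} be a family of elements in E. Then: (i) if ⋁_{i∈I} e_i exists in E, then ⋁_{i∈I} πe_i exists and π(⋁_{i∈I} e_i) = ⋁_{i∈I} πe_i; (ii) if I ≠ ∅ and ⋀_{i∈I} e_i exists in E, then ⋀_{i∈I} πe_i exists and π(⋀_{i∈I} e_i) = ⋀_{i∈I} πe_i; (iii) if (e_i)_{i∈I} is orthosummable, then so is (πe_i)_{i∈I} and π(⊕_{i∈I} e_i) = ⊕_{i∈I} πe_i. -/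
/- Common framework: generalized pseudoeffect algebras (GPEAs), after
   Foulis, Pulmannová, Vinceková, "The exocenter and type decompositions for
   generalized pseudoeffect algebras".
   A partial binary operation ⊕ is represented by its graph
   `R : E → E → E → Prop`, where `R a b s` means "a ⊕ b is defined and equals s". -/

universe u v

namespace GPEAhelp
open GPEApaper PartialAlg

universe w

variable {E : Type w} {A : PartialAlg E} {π : E → E}

/-- The complement map: for each `a`, an element `a'` with `π a ⊕ a' = a`. -/
noncomputable def cmpl (A : PartialAlg E) (π : E → E) (a : E) : E :=
  letI : Nonempty E := ⟨A.zero⟩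
  Classical.epsilon fun x => A.R (π a) x a

theorem pi_zero (hA : A.IsGPEA) (hπ : A.IsExo π) : π A.zero = A.zero := by
  obtain ⟨x, hx⟩ := hπ.2.2.1 A.zero
  exact (hA.2.2.2.2.2.2.1 _ _ hx).1

theorem pi_mono (hπ : A.IsExo π) {a b : E} (h : A.le a b) : A.le (π a) (π b) := by
  obtain ⟨x, hx⟩ := h
  exact ⟨π x, hπ.1 _ _ _ hx⟩

theorem le_trans' (hA : A.IsGPEA) {a b c : E} (h1 : A.le a b) (h2 : A.le b c) :
    A.le a c := by
  obtain ⟨x, hx⟩ := h1; obtain ⟨y, hy⟩ := h2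
  obtain ⟨z, _, hz2⟩ := hA.2.1 a x y b c hx hy
  exact ⟨z, hz2⟩

theorem cmpl_R (hπ : A.IsExo π) (a : E) : A.R (π a) (cmpl A π a) a := by
  letI : Nonempty E := ⟨A.zero⟩
  exact Classical.epsilon_spec (hπ.2.2.1 a)

theorem pi_cmpl (hA : A.IsGPEA) (hπ : A.IsExo π) (a : E) :
    π (cmpl A π a) = A.zero := by
  have h1 := hπ.1 _ _ _ (cmpl_R hπ a)
  rw [hπ.2.1] at h1
  exact hA.2.2.2.2.1 _ _ _ _ h1 ((hA.2.2.2.2.2.2.2 (π a)).1)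

theorem cmpl_add (hA : A.IsGPEA) (hπ : A.IsExo π) {a b s : E} (h : A.R a b s) :
    A.R (cmpl A π a) (cmpl A π b) (cmpl A π s) := by
  have func := hA.1
  have as1 := hA.2.1
  have as2 := hA.2.2.1
  have canL := hA.2.2.2.2.1
  have ha := cmpl_R hπ a
  have hb := cmpl_R hπ b
  have hs := cmpl_R hπ s
  have hπs : A.R (π a) (π b) (π s) := hπ.1 _ _ _ h
  obtain ⟨m, ham, hm⟩ := as2 a (π b) (cmpl A π b) b s hb h
  obtain ⟨n, hn1, hn2⟩ := as1 (π a) (cmpl A π a) (π b) a m ha ham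
  obtain ⟨u, hu1, hu2⟩ := hπ.2.2.2 (π b) (cmpl A π a) (hπ.2.1 b) (pi_cmpl hA hπ a)
  have hun : u = n := func _ _ _ _ hu2 hn1
  rw [hun] at hu1
  obtain ⟨p, hp1, hp2⟩ := as2 (π a) (π b) (cmpl A π a) n m hu1 hn2
  have hps : p = π s := func _ _ _ _ hp1 hπs
  rw [hps] at hp2
  obtain ⟨t, ht1, ht2⟩ := as1 (π s) (cmpl A π a) (cmpl A π b) m s hp2 hm
  have htc : t = cmpl A π s := canL _ _ _ _ ht2 hs
  rwa [htc] at ht1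

theorem cmpl_mono (hA : A.IsGPEA) (hπ : A.IsExo π) {a b : E} (h : A.le a b) :
    A.le (cmpl A π a) (cmpl A π b) := by
  obtain ⟨x, hx⟩ := h
  exact ⟨cmpl A π x, cmpl_add hA hπ hx⟩

theorem pi_fix_of_le (hA : A.IsGPEA) (hπ : A.IsExo π) {a c : E}
    (h : A.le a c) (hc : π c = c) : π a = a := by
  obtain ⟨x, hx⟩ := h
  have h1 := cmpl_add hA hπ hx
  have hcc := cmpl_R hπ c
  rw [hc] at hcc
  have hc0 : cmpl A π c = A.zero :=
    hA.2.2.2.2.1 _ _ _ _ hcc ((hA.2.2.2.2.2.2.2 c).1)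
  rw [hc0] at h1
  have ha0 : cmpl A π a = A.zero := (hA.2.2.2.2.2.2.1 _ _ h1).1
  have h2 := cmpl_R hπ a
  rw [ha0] at h2
  exact hA.1 _ _ _ _ ((hA.2.2.2.2.2.2.2 (π a)).1) h2

theorem sum_le_sum (hA : A.IsGPEA) (hπ : A.IsExo π) {a b c d w : E}
    (ha : π a = a) (hb : π b = A.zero) (hc : π c = c) (hd : π d = A.zero)
    (hac : A.le a c) (hbd : A.le b d) (hw : A.R c d w) :
    ∃ p, A.R a b p ∧ A.le p w := by
  have func := hA.1
  have as1 := hA.2.1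
  have as2 := hA.2.2.1
  obtain ⟨x, hx⟩ := hac
  obtain ⟨y, hy⟩ := hbd
  have hxf : π x = x := by
    have h1 := hπ.1 _ _ _ hx
    rw [ha, hc] at h1
    exact (hA.2.2.2.2.1 _ _ _ _ hx h1).symm
  obtain ⟨m, hm1, hm2⟩ := as2 c b y d w hy hw
  obtain ⟨n, hn1, hn2⟩ := as1 a x b c m hx hm1
  obtain ⟨u, hu1, hu2⟩ := hπ.2.2.2 x b hxf hb
  have hun : u = n := func _ _ _ _ hu1 hn1
  rw [hun] at hu2
  obtain ⟨p, hp1, hp2⟩ := as2 a b x n m hu2 hn2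
  obtain ⟨q, _, hq2⟩ := as1 p x y m w hp2 hm2
  exact ⟨p, hp1, q, hq2⟩

theorem sup_lemma (hA : A.IsGPEA) (hπ : A.IsExo π) (S : Set E) (s : E)
    (h : A.IsSup S s) : A.IsSup (π '' S) (π s) := by
  constructor
  · rintro b ⟨a, haS, rfl⟩
    exact pi_mono hπ (h.1 a haS)
  · intro u hu
    obtain ⟨w, hw1, _⟩ := hπ.2.2.2 (π u) (cmpl A π s) (hπ.2.1 u) (pi_cmpl hA hπ s)
    have hub : ∀ a ∈ S, A.le a w := by
      intro a haS
      have h1 : A.le (π a) u := hu (π a) ⟨a, haS, rfl⟩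
      have h2 : A.le (π a) (π u) := by
        have := pi_mono hπ h1
        rwa [hπ.2.1] at this
      have h3 : A.le (cmpl A π a) (cmpl A π s) := cmpl_mono hA hπ (h.1 a haS)
      obtain ⟨p, hp1, hp2⟩ := sum_le_sum hA hπ (hπ.2.1 a) (pi_cmpl hA hπ a)
        (hπ.2.1 u) (pi_cmpl hA hπ s) h2 h3 hw1
      have : p = a := hA.1 _ _ _ _ hp1 (cmpl_R hπ a)
      rwa [this] at hp2
    have hsw : A.le s w := h.2 w hub
    have hπw : π w = π u := by
      have h1 := hπ.1 _ _ _ hw1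
      rw [hπ.2.1, pi_cmpl hA hπ s] at h1
      exact hA.1 _ _ _ _ h1 ((hA.2.2.2.2.2.2.2 (π u)).1)
    have := pi_mono hπ hsw
    rw [hπw] at this
    exact le_trans' hA this (hπ.2.2.1 u)

theorem inf_lemma (hA : A.IsGPEA) (hπ : A.IsExo π) (S : Set E) (hS : S.Nonempty)
    (s : E) (h : A.IsInf S s) : A.IsInf (π '' S) (π s) := by
  constructor
  · rintro b ⟨a, haS, rfl⟩
    exact pi_mono hπ (h.1 a haS)
  · intro u hu
    obtain ⟨a₀, ha₀⟩ := hS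
    have hu0 : A.le u (π a₀) := hu (π a₀) ⟨a₀, ha₀, rfl⟩
    have huf : π u = u := pi_fix_of_le hA hπ hu0 (hπ.2.1 a₀)
    have hus : A.le u s := by
      refine h.2 u fun a haS => ?_
      exact le_trans' hA (hu (π a) ⟨a, haS, rfl⟩) (hπ.2.2.1 a)
    have := pi_mono hπ hus
    rwa [huf] at this

theorem list_pi (hA : A.IsGPEA) (hπ : A.IsExo π) :
    ∀ {l : List E} {s : E}, A.ListSumsTo l s → A.ListSumsTo (l.map π) (π s) := by
  intro l
  induction l with
  | nil =>
    intro s hs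
    rw [show s = A.zero from hs]
    exact pi_zero hA hπ
  | cons a l ih =>
    rintro s ⟨t, ht, hr⟩
    exact ⟨π t, ih ht, hπ.1 _ _ _ hr⟩

theorem list_unique (hA : A.IsGPEA) :
    ∀ {l : List E} {s t : E}, A.ListSumsTo l s → A.ListSumsTo l t → s = t := by
  intro l
  induction l with
  | nil => intro s t hs ht; rw [show s = A.zero from hs, show t = A.zero from ht]
  | cons a l ih =>
    rintro s t ⟨u, hu, hru⟩ ⟨v, hv, hrv⟩
    rw [ih hu hv] at hru
    exact hA.1 _ _ _ _ hru hrv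

theorem finset_pi (hA : A.IsGPEA) (hπ : A.IsExo π) {ι : Type v} {e : ι → E}
    {F : Finset ι} {t : E} (h : A.FinsetSumsTo e F t) :
    A.FinsetSumsTo (fun i => π (e i)) F (π t) := by
  intro l hn hF
  have h1 := list_pi hA hπ (h l hn hF)
  rwa [List.map_map] at h1

theorem finset_unique (hA : A.IsGPEA) {ι : Type v} {e : ι → E}
    {F : Finset ι} {s t : E} (h1 : A.FinsetSumsTo e F s)
    (h2 : A.FinsetSumsTo e F t) : s = t := by
  have hF : (letI : DecidableEq ι := Classical.decEq ι; F.toList.toFinset) = F :=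
    @Finset.toList_toFinset ι (Classical.decEq ι) F
  exact list_unique hA (h1 F.toList F.nodup_toList hF) (h2 F.toList F.nodup_toList hF)

theorem orthosum_lemma (hA : A.IsGPEA) (hπ : A.IsExo π) {ι : Type v} {e : ι → E}
    {s : E} (h : A.IsOrthosum e s) : A.IsOrthosum (fun i => π (e i)) (π s) := by
  obtain ⟨horth, hsup⟩ := h
  constructor
  · intro F
    obtain ⟨t, ht⟩ := horth F
    exact ⟨π t, finset_pi hA hπ ht⟩
  · have heq : {t | ∃ F : Finset ι, A.FinsetSumsTo (fun i => π (e i)) F t}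
        = π '' {t | ∃ F : Finset ι, A.FinsetSumsTo e F t} := by
      ext t
      constructor
      · rintro ⟨F, hF⟩
        obtain ⟨r, hr⟩ := horth F
        exact ⟨r, ⟨F, hr⟩, (finset_unique hA hF (finset_pi hA hπ hr)).symm⟩
      · rintro ⟨r, ⟨F, hr⟩, rfl⟩
        exact ⟨F, finset_pi hA hπ hr⟩
    rw [heq]
    exact sup_lemma hA hπ _ _ hsup

end GPEAhelp

open GPEApaper PartialAlg in
/-- Theorem 3.12: for π ∈ ΓEX(E) and a family (eᵢ) in E:
(i) π preserves existing suprema, (ii) π preserves existing infima of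
nonempty families, (iii) π preserves orthosums. -/
theorem stmt_9 {E : Type u} (A : PartialAlg E) (hA : A.IsGPEA)
    (π : E → E) (hπ : A.IsExo π) {ι : Type v} (e : ι → E) :
    (∀ s : E, A.IsSup (Set.range e) s →
      A.IsSup (Set.range fun i => π (e i)) (π s)) ∧
    (Nonempty ι → ∀ s : E, A.IsInf (Set.range e) s →
      A.IsInf (Set.range fun i => π (e i)) (π s)) ∧
    (∀ s : E, A.IsOrthosum e s → A.IsOrthosum (fun i => π (e i)) (π s)) := by
  refine ⟨?_, ?_, ?_⟩
  · intro s hs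
    have h1 := GPEAhelp.sup_lemma hA hπ _ _ hs
    rwa [show π '' Set.range e = Set.range fun i => π (e i) from
      (Set.range_comp π e).symm] at h1
  · intro hne s hs
    have h1 := GPEAhelp.inf_lemma hA hπ _ (Set.range_nonempty e) _ hs
    rwa [show π '' Set.range e = Set.range fun i => π (e i) from
      (Set.range_comp π e).symm] at h1
  · intro s hs
    exact GPEAhelp.orthosum_lemma hA hπ hs
end

section
/- Let c be an element of a generalized pseudoeffect algebra E. Then the following are equivalent: (i) c is central, i.e., c ∈ Γ(E); (ii) E[0,c] is a central ideal (direct summand) of E; (iii) E decomposes as a direct sum E = E[0,c] ⊕ {f ∈ E : f ⊥ c}. -/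
/- Common framework: generalized pseudoeffect algebras (GPEAs), after
   Foulis, Pulmannová, Vinceková, "The exocenter and type decompositions for
   generalized pseudoeffect algebras".
   A partial binary operation ⊕ is represented by its graph
   `R : E → E → E → Prop`, where `R a b s` means "a ⊕ b is defined and equals s". -/

universe u v

namespace GPEApaper.PartialAlg

variable {E : Type u} {A : PartialAlg E}

theorem aux_le_trans (hA : A.IsGPEA) {a b c : E} (h1 : A.le a b) (h2 : A.le b c) :
    A.le a c := by
  obtain ⟨_, assoc1, _⟩ := hA
  obtain ⟨x, hx⟩ := h1
  obtain ⟨y, hy⟩ := h2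
  obtain ⟨xy, _, hxy2⟩ := assoc1 a x y b c hx hy
  exact ⟨xy, hxy2⟩

theorem aux_le_antisymm (hA : A.IsGPEA) {a b : E} (h1 : A.le a b) (h2 : A.le b a) :
    a = b := by
  obtain ⟨func, assoc1, _, _, cancL, _, pos, zer⟩ := hA
  obtain ⟨x, hx⟩ := h1
  obtain ⟨y, hy⟩ := h2
  obtain ⟨xy, hxy1, hxy2⟩ := assoc1 a x y b a hx hy
  have hxy0 : xy = A.zero := cancL a xy A.zero a hxy2 (zer a).1
  obtain ⟨hx0, _⟩ := pos x y (hxy0 ▸ hxy1)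
  exact func a A.zero a b (zer a).1 (hx0 ▸ hx)

theorem aux_perp_symm {a b : E} (h : A.perp a b) : A.perp b a := by
  obtain ⟨s, h1, h2⟩ := h; exact ⟨s, h2, h1⟩

/-- If c is central and b ⊕ c is defined, then b ⊥ c. -/
theorem aux_defc_perp (hA : A.IsGPEA) {c : E} (hc : A.Central c) {b : E}
    (h : A.Defined b c) : A.perp b c := by
  have hcc : A.le c c := ⟨A.zero, (hA.2.2.2.2.2.2.2 c).1⟩
  exact aux_perp_symm (hc.2.1 c b hcc h)

/-- If c is central and c ⊕ b is defined, then b ⊥ c. -/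
theorem aux_defc_perp' (hA : A.IsGPEA) {c : E} (hc : A.Central c) {b : E}
    (h : A.Defined c b) : A.perp b c := by
  obtain ⟨s, hcb⟩ := h
  have func := hA.1
  have conj := hA.2.2.2.1
  have cancL := hA.2.2.2.2.1
  obtain ⟨⟨d, hd⟩, _⟩ := conj c b s hcb
  have hperp : A.perp d c := aux_defc_perp hA hc ⟨s, hd⟩
  obtain ⟨t, hdc, hcd⟩ := hperp
  have hts : t = s := func d c t s hdc hd
  have hdb : d = b := cancL c d b s (hts ▸ hcd) hcb
  exact ⟨s, hdb ▸ hd, hdb ▸ hts ▸ hcd⟩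

/-- The key step of uniqueness: from two decompositions produce the data
r, m, n with p ⊕ r = c, p' ⊕ r = m, m ⊕ n = c, n ⊕ q = q'. -/
theorem aux_key (hA : A.IsGPEA) {c : E} (hc : A.Central c) {p q p' q' a : E}
    (hp : A.le p c) (hq : A.perp q c) (hp' : A.le p' c) (hq' : A.perp q' c)
    (hpq : A.R p q a) (hpq' : A.R p' q' a) :
    ∃ r m n, A.R p r c ∧ A.R p' r m ∧ A.R m n c ∧ A.R n q q' := by
  obtain ⟨func, assoc1, assoc2, conj, cancL, cancR, pos, zer⟩ := hA
  have hA' : A.IsGPEA := ⟨func, assoc1, assoc2, conj, cancL, cancR, pos, zer⟩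
  obtain ⟨s, hqc, hcq⟩ := hq
  obtain ⟨s', hq'c, hcq'⟩ := hq'
  obtain ⟨r, hpr⟩ := hp
  have hrc : A.le r c := (conj p r c hpr).2
  -- step 1 : r ⊥ q
  obtain ⟨t, hrq, hqr⟩ := hc.2.1 r q hrc ⟨s, hqc⟩
  -- step 2 : p ⊕ t = s
  obtain ⟨rq, hrq2, hpt⟩ := assoc1 p r q c s hpr hcq
  have : rq = t := func r q rq t hrq2 hrq
  rw [this] at hpt
  -- step 3 : a ⊕ r = s
  obtain ⟨pq, hpq2, har⟩ := assoc2 p q r t s hqr hpt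
  have : pq = a := func p q pq a hpq2 hpq
  rw [this] at har
  -- step 4 : r ⊥ q'
  obtain ⟨u, hrq', hq'r⟩ := hc.2.1 r q' hrc ⟨s', hq'c⟩
  -- step 5 : p' ⊕ u = s
  obtain ⟨q'r, hq'r2, hp'u⟩ := assoc1 p' q' r a s hpq' har
  have : q'r = u := func q' r q'r u hq'r2 hq'r
  rw [this] at hp'u
  -- step 6 : m := p' ⊕ r, with m ⊕ q' = s
  obtain ⟨m, hp'r, hmq'⟩ := assoc2 p' r q' u s hrq' hp'u
  -- step 7 : m ≤ c
  obtain ⟨n, hmn⟩ := hc.2.2.1 p' r m hp' hrc hp'r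
  -- step 8 : n ≤ c
  have hnc : A.le n c := (conj m n c hmn).2
  -- step 9 : n ⊥ q
  obtain ⟨w, hnq, hqn⟩ := hc.2.1 n q hnc ⟨s, hqc⟩
  -- step 10 : m ⊕ w = s
  obtain ⟨nq, hnq2, hmw⟩ := assoc1 m n q c s hmn hcq
  have : nq = w := func n q nq w hnq2 hnq
  rw [this] at hmw
  -- step 11 : q' = w
  have : q' = w := cancL m q' w s hmq' hmw
  rw [← this] at hnq
  exact ⟨r, m, n, hpr, hp'r, hmn, hnq⟩

/-- Uniqueness of the decomposition with respect to a central element. -/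
theorem aux_uniq (hA : A.IsGPEA) {c : E} (hc : A.Central c) {p q p' q' a : E}
    (hp : A.le p c) (hq : A.perp q c) (hp' : A.le p' c) (hq' : A.perp q' c)
    (hpq : A.R p q a) (hpq' : A.R p' q' a) : p = p' ∧ q = q' := by
  obtain ⟨r, m, n, hpr, hp'r, hmn, hnq⟩ := aux_key hA hc hp hq hp' hq' hpq hpq'
  obtain ⟨r', m', n', hp'r', hpr', hm'n', hn'q'⟩ := aux_key hA hc hp' hq' hp hq hpq' hpq
  obtain ⟨func, assoc1, assoc2, conj, cancL, cancR, pos, zer⟩ := hA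
  -- n' ⊕ n = 0
  obtain ⟨nn, hn'n, hnnq⟩ := assoc2 n' n q q' q hnq hn'q'
  have hnn0 : nn = A.zero := cancR q nn A.zero q hnnq (zer q).2
  obtain ⟨hn'0, hn0⟩ := pos n' n (hnn0 ▸ hn'n)
  -- m = c
  subst hn0
  have hmc : c = m := func m A.zero c m hmn (zer m).1
  -- p = p'
  have hpp' : p' = p := cancR r p' p c (hmc ▸ hp'r) hpr
  refine ⟨hpp'.symm, ?_⟩
  exact cancL p q q' a hpq (hpp' ▸ hpq')

/-- (i) ⇒ (iii). -/
theorem aux_central_to_ds (hA : A.IsGPEA) {c : E} (hc : A.Central c) :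
    A.IsDirectSum {a : E | A.le a c} {f : E | A.perp f c} := by
  have func := hA.1
  have assoc1 := hA.2.1
  have assoc2 := hA.2.2.1
  have conj := hA.2.2.2.1
  have zer := hA.2.2.2.2.2.2.2
  refine ⟨⟨⟨A.zero, ⟨c, (zer c).2⟩⟩, ?_, ?_⟩, ⟨⟨A.zero, ⟨c, (zer c).2, (zer c).1⟩⟩, ?_, ?_⟩,
    ?_, ?_⟩
  · exact fun a ha b hb => aux_le_trans hA hb ha
  · exact fun a ha b hb s hs => hc.2.2.1 a b s ha hb hs
  · -- S' is downward closed
    intro f hf b hb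
    obtain ⟨x, hbx⟩ := hb
    obtain ⟨s, _, hcf⟩ := hf
    obtain ⟨cb, hcb, _⟩ := assoc2 c b x f s hbx hcf
    exact aux_defc_perp' hA hc ⟨cb, hcb⟩
  · -- S' is closed under sums
    intro f hf g hg s hs
    obtain ⟨sf, hf1, -⟩ := hf
    obtain ⟨sg, hg1, -⟩ := hg
    exact aux_defc_perp hA hc (hc.2.2.2 f g s ⟨sf, hf1⟩ ⟨sg, hg1⟩ hs)
  · intro a ha b hb
    obtain ⟨sb, hb1, -⟩ := hb
    exact hc.2.1 a b ha ⟨sb, hb1⟩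
  · -- unique decompositions
    intro a
    obtain ⟨a₁, a₂, h1, h2, h3⟩ := hc.1 a
    refine ⟨(a₁, a₂), ⟨h1, aux_defc_perp hA hc h2, h3⟩, ?_⟩
    rintro ⟨y₁, y₂⟩ ⟨g1, g2, g3⟩
    obtain ⟨e1, e2⟩ := aux_uniq hA hc g1 g2 h1 (aux_defc_perp hA hc h2) g3 h3
    simp only [Prod.mk.injEq]
    exact ⟨e1, e2⟩

/-- (ii) ⇒ (i). -/
theorem aux_ds_to_central (hA : A.IsGPEA) {c : E} {S' : Set E}
    (h : A.IsDirectSum {a : E | A.le a c} S') : A.Central c := by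
  obtain ⟨func, assoc1, assoc2, conj, cancL, cancR, pos, zer⟩ := hA
  have hA' : A.IsGPEA := ⟨func, assoc1, assoc2, conj, cancL, cancR, pos, zer⟩
  obtain ⟨hS, hS', horth, hdec⟩ := h
  have hcS : A.le c c := ⟨A.zero, (zer c).1⟩
  have hS'perp : ∀ b ∈ S', A.perp b c := fun b hb => aux_perp_symm (horth c hcS b hb)
  -- if x ≤ c and x ⊕ c is defined then x = 0
  have hZ : ∀ x : E, A.le x c → A.Defined x c → x = A.zero := by
    intro x hx hd
    obtain ⟨y, hxy⟩ := hd
    have hyS : A.le y c := hS.2.2 x hx c hcS y hxy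
    have hcy : A.le c y := (conj x c y hxy).2
    have : y = c := aux_le_antisymm hA' hyS hcy
    subst this
    exact cancR y x A.zero y hxy (zer y).2
  -- if b ⊕ c is defined then b ∈ S'
  have hD : ∀ b : E, A.Defined b c → b ∈ S' := by
    intro b hb
    obtain ⟨⟨b₁, b₂⟩, ⟨hb₁, hb₂, hbb⟩, _⟩ := hdec b
    obtain ⟨v, hv1, hv2⟩ := horth b₁ hb₁ b₂ hb₂
    have : v = b := func b₁ b₂ v b hv1 hbb
    rw [this] at hv2
    obtain ⟨t, hbc⟩ := hb
    obtain ⟨b₁c, hb₁c, _⟩ := assoc1 b₂ b₁ c b t hv2 hbc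
    have hb₁0 : b₁ = A.zero := hZ b₁ hb₁ ⟨b₁c, hb₁c⟩
    subst hb₁0
    have : b = b₂ := func A.zero b₂ b b₂ hbb (zer b₂).2
    exact this ▸ hb₂
  refine ⟨?_, ?_, ?_, ?_⟩
  · intro a
    obtain ⟨⟨a₁, a₂⟩, ⟨h1, h2, h3⟩, _⟩ := hdec a
    obtain ⟨s, hs1, _⟩ := hS'perp a₂ h2
    exact ⟨a₁, a₂, h1, ⟨s, hs1⟩, h3⟩
  · intro a b ha hb
    exact horth a ha b (hD b hb)
  · intro a b s ha hb hs
    exact hS.2.2 a ha b hb s hs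
  · intro a b ab ha hb hab
    obtain ⟨s, hs1, _⟩ := hS'perp ab (hS'.2.2 a (hD a ha) b (hD b hb) ab hab)
    exact ⟨s, hs1⟩

end GPEApaper.PartialAlg

open GPEApaper PartialAlg in
/-- Theorem 4.2: for c ∈ E the following are equivalent: (i) c is central;
(ii) E[0,c] is a central ideal (direct summand) of E;
(iii) E = E[0,c] ⊕ {f ∈ E : f ⊥ c}. -/
theorem stmt_10 {E : Type u} (A : PartialAlg E) (hA : A.IsGPEA) (c : E) :
    (A.Central c ↔ A.IsCentralIdeal {a : E | A.le a c}) ∧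
    (A.Central c ↔ A.IsDirectSum {a : E | A.le a c} {f : E | A.perp f c}) := by
  constructor
  · exact ⟨fun hc => ⟨_, aux_central_to_ds hA hc⟩,
      fun ⟨S', h⟩ => aux_ds_to_central hA h⟩
  · exact ⟨fun hc => aux_central_to_ds hA hc, fun h => aux_ds_to_central hA h⟩
end
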